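/- arXiv:0807.0554 — 11 statements merged into one kernel-verified Lean document; each statement's English description precedes it below -/
import Mathlib

section
/- Fix α∈(0,1) and γ∈(0,α). For every integer n≥3, every integer k≥2 and all positive integers n_1,…,n_k with n_1+⋯+n_k = n−1, the alpha-gamma EPPF satisfies the sampling-consistency recursion (1 − p^seq_{α,γ}(n−1,1))·p^seq_{α,γ}(n_1,…,n_k) = Σ_{i=1}^k p^seq_{α,γ}(n_1,…,n_{i−1}, n_i+1, n_{i+1},…,n_k) + p^seq_{α,γ}(n_1,…,n_k,1). (This identity is the criterion for sampling consistency of the alpha-gamma splitting rules, the first assertion of Theorem 2.) -/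
open scoped BigOperators

/-- The P*-factor of the alpha-gamma EPPF:
`P*_{α,γ}(n_1,…,n_k) = α^{k−2}·(Γ(k−1−γ/α)/Γ(1−γ/α))·(∏_j Γ(n_j−α)/Γ(1−α))·(Γ(1−α)/Γ(n−α))`
where `n = n_1+⋯+n_k`. -/
noncomputable def Pstar (α γ : ℝ) {k : ℕ} (m : Fin k → ℕ) : ℝ :=
  α ^ (k - 2) * (Real.Gamma ((k : ℝ) - 1 - γ / α) / Real.Gamma (1 - γ / α)) *
    (∏ j, Real.Gamma ((m j : ℝ) - α) / Real.Gamma (1 - α)) *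
    (Real.Gamma (1 - α) / Real.Gamma (((∑ j, m j : ℕ) : ℝ) - α))

/-- The alpha-gamma EPPF
`p^seq_{α,γ}(n_1,…,n_k) = (γ + (1−α−γ)·(Σ_{i≠j} n_i n_j)/(n(n−1)))·P*_{α,γ}(n_1,…,n_k)`. -/
noncomputable def pseq (α γ : ℝ) {k : ℕ} (m : Fin k → ℕ) : ℝ :=
  (γ + (1 - α - γ) *
      (∑ i, ∑ j, if i ≠ j then (m i : ℝ) * (m j : ℝ) else 0) /
      (((∑ j, m j : ℕ) : ℝ) * (((∑ j, m j : ℕ) : ℝ) - 1))) * Pstar α γ m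

lemma offdiag_sum {k : ℕ} (f : Fin k → ℝ) :
    (∑ i, ∑ j, if i ≠ j then f i * f j else 0) = (∑ j, f j)^2 - ∑ j, (f j)^2 := by
  have h : ∀ i : Fin k, (∑ j, if i ≠ j then f i * f j else 0)
      = f i * (∑ j, f j) - (f i)^2 := by
    intro i
    have h2 : ∀ j : Fin k, (if i ≠ j then f i * f j else 0)
        = f i * f j - (if i = j then f i * f j else 0) := by
      intro j; by_cases h : i = j <;> simp [h]
    rw [Finset.sum_congr rfl fun j _ => h2 j, Finset.sum_sub_distrib,
      Finset.sum_ite_eq, Finset.mul_sum]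
    simp [sq]
  rw [Finset.sum_congr rfl fun i _ => h i, Finset.sum_sub_distrib, ← Finset.sum_mul, sq]

lemma offdiag_sum' {k : ℕ} (m : Fin k → ℕ) :
    (∑ i, ∑ j, if i ≠ j then (m i : ℝ) * (m j : ℝ) else 0)
      = (∑ j, (m j:ℝ))^2 - ∑ j, ((m j:ℝ))^2 := offdiag_sum _

set_option maxHeartbeats 1000000 in
/-- Sampling-consistency recursion for the alpha-gamma EPPF: for `α∈(0,1)`, `γ∈(0,α)`,
`n ≥ 3`, `k ≥ 2` and positive integers `n_1,…,n_k` with sum `n−1`,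
`(1 − p^seq(n−1,1))·p^seq(n_1,…,n_k)
   = Σ_i p^seq(n_1,…,n_i+1,…,n_k) + p^seq(n_1,…,n_k,1)`. -/
theorem stmt0 (α γ : ℝ) (hα : α ∈ Set.Ioo (0 : ℝ) 1) (hγ : γ ∈ Set.Ioo (0 : ℝ) α)
    (n : ℕ) (hn : 3 ≤ n) (k : ℕ) (hk : 2 ≤ k) (m : Fin k → ℕ)
    (hpos : ∀ i, 0 < m i) (hsum : ∑ i, m i = n - 1) :
    (1 - pseq α γ ![n - 1, 1]) * pseq α γ m =
      (∑ i, pseq α γ (Function.update m i (m i + 1))) + pseq α γ (Fin.snoc m 1) := by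
  obtain ⟨hα0, hα1⟩ := hα
  obtain ⟨hγ0, hγα⟩ := hγ
  have hn' : (3:ℝ) ≤ (n:ℝ) := by exact_mod_cast hn
  have hk' : (2:ℝ) ≤ (k:ℝ) := by exact_mod_cast hk
  have hαne : α ≠ 0 := ne_of_gt hα0
  have hγa1 : γ/α < 1 := (div_lt_one hα0).mpr hγα
  have hγa0 : 0 < γ/α := div_pos hγ0 hα0
  have hnne : (n:ℝ) ≠ 0 := by positivity
  have hn1 : (n:ℝ) - 1 ≠ 0 := ne_of_gt (by linarith)
  have hn2 : (n:ℝ) - 2 ≠ 0 := ne_of_gt (by linarith)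
  have hE : (n:ℝ) - 1 - α ≠ 0 := ne_of_gt (by linarith)
  have hg2 : Real.Gamma (1-α) ≠ 0 := (Real.Gamma_pos_of_pos (by linarith)).ne'
  have hg1 : Real.Gamma ((n:ℝ)-1-α) ≠ 0 := (Real.Gamma_pos_of_pos (by linarith)).ne'
  have hΓγ : Real.Gamma (1-γ/α) ≠ 0 := (Real.Gamma_pos_of_pos (by linarith)).ne'
  have hkγ : (k:ℝ) - 1 - γ/α ≠ 0 := ne_of_gt (by linarith)
  have hΓn : Real.Gamma ((n:ℝ) - α) = ((n:ℝ)-1-α) * Real.Gamma ((n:ℝ)-1-α) := by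
    rw [show (n:ℝ) - α = ((n:ℝ)-1-α)+1 by ring, Real.Gamma_add_one hE]
  have hm1 : ∀ i, (1:ℝ) ≤ (m i:ℝ) := fun i => by exact_mod_cast hpos i
  have hmiα : ∀ i, (m i:ℝ) - α ≠ 0 := fun i => ne_of_gt (by linarith [hm1 i])
  have hSm : ((∑ j, m j : ℕ) : ℝ) = (n:ℝ) - 1 := by
    rw [hsum, Nat.cast_sub (by omega), Nat.cast_one]
  have hSm' : (∑ j, (m j:ℝ)) = (n:ℝ) - 1 := by rw [← Nat.cast_sum]; exact hSm
  set Q : ℝ := ∑ j, (m j:ℝ)^2 with hQ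
  set P : ℝ := Pstar α γ m with hP
  set c : ℝ := 1 - α - γ with hc
  -- main p^seq(m)
  have hpm : pseq α γ m =
      (γ + c * (((n:ℝ)-1)^2 - Q)/(((n:ℝ)-1)*((n:ℝ)-2))) * P := by
    rw [pseq, offdiag_sum', hSm, hSm', ← hP, ← hQ]
    simp only [hc]; ring_nf
  -- sums over updated vectors
  have hsum_up : ∀ i, (∑ j, Function.update m i (m i + 1) j) = n := by
    intro i
    rw [Finset.sum_update_of_mem (Finset.mem_univ i)]
    have h1 := Finset.sum_eq_sum_sdiff_singleton_add (Finset.mem_univ i) m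
    omega
  have hsum_upR : ∀ i, (∑ j, ((Function.update m i (m i + 1) j : ℕ):ℝ)) = (n:ℝ) := by
    intro i; rw [← Nat.cast_sum, hsum_up i]
  have hQ_up : ∀ i, (∑ j, ((Function.update m i (m i + 1) j : ℕ):ℝ)^2)
      = Q + 2*(m i:ℝ) + 1 := by
    intro i
    have hfun : (fun j => ((Function.update m i (m i + 1) j : ℕ):ℝ)^2)
        = Function.update (fun j => ((m j:ℝ))^2) i (((m i:ℝ)+1)^2) := by
      funext j; rcases eq_or_ne j i with h|h
      · subst h; simp only [Function.update_self]; push_cast; ring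
      · simp [Function.update_of_ne h]
    rw [hfun, Finset.sum_update_of_mem (Finset.mem_univ i)]
    have h2 : ∑ j ∈ Finset.univ \ {i}, ((m j:ℝ))^2 = Q - (m i:ℝ)^2 := by
      rw [eq_sub_iff_add_eq, hQ,
        Finset.sum_eq_sum_sdiff_singleton_add (Finset.mem_univ i) (fun j => ((m j:ℝ))^2)]
    rw [h2]; ring
  -- Pstar of update
  have hPs_up : ∀ i, Pstar α γ (Function.update m i (m i + 1))
      = ((m i:ℝ) - α)/((n:ℝ)-1-α) * P := by
    intro i
    rw [hP, Pstar, Pstar, hsum_up i, hSm, hΓn]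
    have hprod : (∏ j, Real.Gamma (((Function.update m i (m i+1) j : ℕ):ℝ) - α)/Real.Gamma (1-α))
        = ((m i:ℝ) - α) * ∏ j, Real.Gamma ((m j:ℝ) - α)/Real.Gamma (1-α) := by
      have hfun : (fun j => Real.Gamma (((Function.update m i (m i+1) j : ℕ):ℝ) - α)/Real.Gamma (1-α))
          = Function.update (fun j => Real.Gamma ((m j:ℝ) - α)/Real.Gamma (1-α)) i
              (Real.Gamma (((m i:ℝ)+1) - α)/Real.Gamma (1-α)) := by
        funext j; rcases eq_or_ne j i with h|h
        · subst h; simp only [Function.update_self]; push_cast; ring_nf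
        · simp [Function.update_of_ne h]
      rw [hfun, Finset.prod_update_of_mem (Finset.mem_univ i),
        Finset.prod_eq_mul_prod_sdiff_singleton_of_mem (Finset.mem_univ i)
          (fun j => Real.Gamma ((m j:ℝ) - α)/Real.Gamma (1-α)),
        show (m i:ℝ) + 1 - α = ((m i:ℝ) - α) + 1 by ring, Real.Gamma_add_one (hmiα i)]
      ring
    rw [hprod]
    field_simp
  -- pseq of update
  have hpu : ∀ i, pseq α γ (Function.update m i (m i + 1))
      = (γ + c * ((n:ℝ)^2 - Q - 2*(m i:ℝ) - 1)/((n:ℝ)*((n:ℝ)-1)))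
          * (((m i:ℝ) - α)/((n:ℝ)-1-α) * P) := by
    intro i
    rw [pseq, offdiag_sum',
      hsum_up i, hsum_upR i, hQ_up i, hPs_up i]
    ring
  -- snoc
  have hsum_sn : (∑ j, (Fin.snoc m 1 : Fin (k+1) → ℕ) j) = n := by
    rw [Fin.sum_univ_castSucc]
    simp only [Fin.snoc_castSucc, Fin.snoc_last]
    omega
  have hsum_snR : (∑ j, ((Fin.snoc m 1 : Fin (k+1) → ℕ) j : ℝ)) = (n:ℝ) := by
    rw [← Nat.cast_sum, hsum_sn]
  have hQ_sn : (∑ j, ((Fin.snoc m 1 : Fin (k+1) → ℕ) j : ℝ)^2) = Q + 1 := by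
    rw [Fin.sum_univ_castSucc]
    simp only [Fin.snoc_castSucc, Fin.snoc_last, Nat.cast_one]
    norm_num
    exact hQ.symm
  have hPs_sn : Pstar α γ (Fin.snoc m 1)
      = (α*((k:ℝ)-1) - γ)/((n:ℝ)-1-α) * P := by
    rw [hP, Pstar, Pstar, hsum_sn, hSm, hΓn]
    have hprod : (∏ j : Fin (k+1), Real.Gamma (((Fin.snoc m 1 : Fin (k+1) → ℕ) j : ℝ) - α)/Real.Gamma (1-α))
        = ∏ j, Real.Gamma ((m j:ℝ) - α)/Real.Gamma (1-α) := by
      rw [Fin.prod_univ_castSucc]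
      simp only [Fin.snoc_castSucc, Fin.snoc_last, Nat.cast_one]
      rw [div_self hg2, mul_one]
    have hΓk : Real.Gamma (((k+1:ℕ):ℝ) - 1 - γ/α)
        = ((k:ℝ) - 1 - γ/α) * Real.Gamma ((k:ℝ) - 1 - γ/α) := by
      rw [show ((k+1:ℕ):ℝ) - 1 - γ/α = ((k:ℝ) - 1 - γ/α) + 1 by push_cast; ring,
        Real.Gamma_add_one hkγ]
    have hpow : α ^ (k + 1 - 2) = α ^ (k-2) * α := by
      rw [show k + 1 - 2 = (k-2) + 1 by omega, pow_succ]
    rw [hprod, hΓk, hpow]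
    generalize hGp : (∏ j, Real.Gamma ((m j:ℝ) - α) / Real.Gamma (1-α)) = Pr
    generalize hGk : Real.Gamma ((k:ℝ) - 1 - γ/α) = Gk
    generalize hGg : Real.Gamma (1 - γ/α) = Gg
    generalize hGa : Real.Gamma (1 - α) = Ga
    generalize hGn : Real.Gamma ((n:ℝ) - 1 - α) = Gn
    rw [hGg] at hΓγ
    rw [hGa] at hg2
    rw [hGn] at hg1
    field_simp
  have hpsn : pseq α γ (Fin.snoc m 1)
      = (γ + c * ((n:ℝ)^2 - Q - 1)/((n:ℝ)*((n:ℝ)-1)))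
          * ((α*((k:ℝ)-1) - γ)/((n:ℝ)-1-α) * P) := by
    rw [pseq, offdiag_sum',
      hsum_sn, hsum_snR, hQ_sn, hPs_sn]
    ring
  -- two-block term
  have hcast : ((n-1 : ℕ) : ℝ) = (n:ℝ) - 1 := by
    rw [Nat.cast_sub (by omega), Nat.cast_one]
  have hsum2 : (n - 1 + 1 : ℕ) = n := by omega
  have hPs2 : Pstar α γ ![n-1, 1] = 1/((n:ℝ)-1-α) := by
    rw [Pstar, Fin.prod_univ_two, Fin.sum_univ_two]
    simp only [Matrix.cons_val_zero, Matrix.cons_val_one, Matrix.head_cons, hsum2,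
      Nat.cast_one, hcast]
    rw [show ((2:ℕ):ℝ) - 1 - γ/α = 1 - γ/α by norm_num, div_self hΓγ, div_self hg2, hΓn]
    field_simp
    ring
  have hp2 : pseq α γ ![n-1, 1]
      = (γ + c * (2*((n:ℝ)-1))/((n:ℝ)*((n:ℝ)-1))) * (1/((n:ℝ)-1-α)) := by
    rw [pseq, hPs2]
    congr 1
    have hds : (∑ i, ∑ j, if i ≠ j then ((![n-1,1] : Fin 2 → ℕ) i : ℝ) * ((![n-1,1] : Fin 2 → ℕ) j : ℝ) else 0)
        = 2*((n:ℝ)-1) := by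
      simp [Fin.sum_univ_two, hcast]
      ring
    rw [hds, Fin.sum_univ_two]
    simp only [Matrix.cons_val_zero, Matrix.cons_val_one, Matrix.head_cons, hsum2]
    rw [hc]
  -- expand the sum over i
  have hterm : ∀ i, pseq α γ (Function.update m i (m i + 1))
      = ((γ + c*((n:ℝ)^2 - Q - 1)/((n:ℝ)*((n:ℝ)-1))) * (-α) * (P/((n:ℝ)-1-α)))
        + (((γ + c*((n:ℝ)^2 - Q - 1)/((n:ℝ)*((n:ℝ)-1))) + 2*c*α/((n:ℝ)*((n:ℝ)-1))) * (P/((n:ℝ)-1-α))) * (m i:ℝ)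
        + ((-2*c/((n:ℝ)*((n:ℝ)-1))) * (P/((n:ℝ)-1-α))) * (m i:ℝ)^2 := by
    intro i; rw [hpu i]; ring
  have hsum_main : ∑ i, pseq α γ (Function.update m i (m i + 1))
      = (k:ℝ) * ((γ + c*((n:ℝ)^2 - Q - 1)/((n:ℝ)*((n:ℝ)-1))) * (-α) * (P/((n:ℝ)-1-α)))
        + (((γ + c*((n:ℝ)^2 - Q - 1)/((n:ℝ)*((n:ℝ)-1))) + 2*c*α/((n:ℝ)*((n:ℝ)-1))) * (P/((n:ℝ)-1-α))) * ((n:ℝ)-1)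
        + ((-2*c/((n:ℝ)*((n:ℝ)-1))) * (P/((n:ℝ)-1-α))) * Q := by
    rw [Finset.sum_congr rfl fun i _ => hterm i]
    rw [Finset.sum_add_distrib, Finset.sum_add_distrib, Finset.sum_const,
      ← Finset.mul_sum, ← Finset.mul_sum, hSm', ← hQ]
    simp [Finset.card_univ, mul_comm]
  rw [hp2, hpm, hsum_main, hpsn]
  simp only [hc]
  field_simp
  ring
end

section
/- Fix α∈(0,1) and γ∈(0,α). For all integers n≥2 and 1≤m≤n−1, q^dec_{γ,1−α}(n−1, n−m) = C(n, n−m)·(mγ/n + m(n−m)(1−α−γ)/(n(n−1)))·Γ(m−α)Γ(n−m−γ)/(Γ(n−α)Γ(1−γ)). (This rearrangement of the decrement matrix entry is the key step identifying the probability that, in the alpha-gamma tree with n leaves, the subtree of the first split containing leaf 1 has m leaves.) -/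
open scoped BigOperators

/-- Decrement matrix of the ordered Chinese restaurant process with parameters `(a,θ)`:
`q^dec_{a,θ}(N,m) = C(N,m)·(((N−m)a+mθ)/N)·Γ(m−a)Γ(N−m+θ)/(Γ(1−a)Γ(N+θ))`. -/
noncomputable def qdec (a θ : ℝ) (N m : ℕ) : ℝ :=
  (N.choose m : ℝ) * ((((N : ℝ) - m) * a + m * θ) / N) *
    (Real.Gamma ((m : ℝ) - a) * Real.Gamma ((N : ℝ) - m + θ)) /
    (Real.Gamma (1 - a) * Real.Gamma ((N : ℝ) + θ))

/-- For `α∈(0,1)`, `γ∈(0,α)`, integers `n ≥ 2` and `1 ≤ m ≤ n−1`,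
`q^dec_{γ,1−α}(n−1, n−m)
  = C(n, n−m)·(mγ/n + m(n−m)(1−α−γ)/(n(n−1)))·Γ(m−α)Γ(n−m−γ)/(Γ(n−α)Γ(1−γ))`. -/
theorem stmt2 (α γ : ℝ) (hα : α ∈ Set.Ioo (0 : ℝ) 1) (hγ : γ ∈ Set.Ioo (0 : ℝ) α)
    (n m : ℕ) (hn : 2 ≤ n) (hm : 1 ≤ m) (hm' : m ≤ n - 1) :
    qdec γ (1 - α) (n - 1) (n - m) =
      (n.choose (n - m) : ℝ) *
        ((m : ℝ) * γ / n + (m : ℝ) * ((n : ℝ) - m) * (1 - α - γ) / ((n : ℝ) * ((n : ℝ) - 1))) *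
        Real.Gamma ((m : ℝ) - α) * Real.Gamma ((n : ℝ) - m - γ) /
        (Real.Gamma ((n : ℝ) - α) * Real.Gamma (1 - γ)) := by
  obtain ⟨hα0, hα1⟩ := hα
  obtain ⟨hγ0, hγα⟩ := hγ
  have hmn : m ≤ n := by omega
  have hc1 : ((n - 1 : ℕ) : ℝ) = (n : ℝ) - 1 := by
    rw [Nat.cast_sub (by omega)]; norm_num
  have hc2 : ((n - m : ℕ) : ℝ) = (n : ℝ) - m := by
    rw [Nat.cast_sub hmn]
  have hchoose : (n : ℝ) * ((n - 1).choose (n - m) : ℝ) = (n.choose (n - m) : ℝ) * m := by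
    have h1 : (n - 1).choose (n - m) = (n - 1).choose (m - 1) := by
      have e : n - m = (n - 1) - (m - 1) := by omega
      rw [e, Nat.choose_symm (by omega)]
    have h2 : n.choose (n - m) = n.choose m := Nat.choose_symm hmn
    have h3 := Nat.add_one_mul_choose_eq (n - 1) (m - 1)
    have hn1 : n - 1 + 1 = n := by omega
    have hm1 : m - 1 + 1 = m := by omega
    rw [hn1, hm1] at h3
    rw [h1, h2]
    exact_mod_cast h3
  unfold qdec
  rw [hc1, hc2]
  have hG1 : (n : ℝ) - 1 - ((n : ℝ) - m) + (1 - α) = (m : ℝ) - α := by ring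
  have hG2 : (n : ℝ) - 1 + (1 - α) = (n : ℝ) - α := by ring
  rw [hG1, hG2]
  have hn0 : (n : ℝ) ≠ 0 := by positivity
  have hn1' : (n : ℝ) - 1 ≠ 0 := by
    have : (2 : ℝ) ≤ n := by exact_mod_cast hn
    linarith
  have hGa : Real.Gamma ((n : ℝ) - α) ≠ 0 := by
    have : (2 : ℝ) ≤ n := by exact_mod_cast hn
    exact (Real.Gamma_pos_of_pos (by linarith)).ne'
  have hGg : Real.Gamma (1 - γ) ≠ 0 := (Real.Gamma_pos_of_pos (by linarith)).ne'
  have hm0 : (m : ℝ) ≠ 0 := by positivity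
  have hC : ((n.choose (n - m)) : ℝ) = (n : ℝ) * ((n - 1).choose (n - m) : ℝ) / m := by
    field_simp [hchoose]
    linarith [hchoose]
  rw [hC]
  field_simp
  ring
end

section
/- Fix α∈(0,1) and γ∈(0,α). Let k≥2, let n_1,…,n_k be positive integers with sum n, and let i∈{1,…,k}. Then q^dec_{γ,1−α}(n−1, n−n_i)·p^PD_{α,−γ}(n_1,…,n_{i−1},n_{i+1},…,n_k) = C(n, n_i)·(n_iγ/n + n_i(n−n_i)(1−α−γ)/(n(n−1)))·P*_{α,γ}(n_1,…,n_k). (This is the joint-probability identity from the spinal Chinese-restaurant decomposition: the left side is the probability of the first spinal bush size times the conditional probability of the bush composition, in the proof of Proposition 3 of the paper.) -/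
open scoped BigOperators

/-- The Ewens–Pitman EPPF
`p^PD_{a,θ}(m_1,…,m_j) = a^{j−1}·(Γ(j+θ/a)Γ(1+θ)/(Γ(1+θ/a)Γ(m+θ)))·∏_i Γ(m_i−a)/Γ(1−a)`. -/
noncomputable def pPD (a θ : ℝ) {j : ℕ} (m : Fin j → ℕ) : ℝ :=
  a ^ (j - 1) *
    (Real.Gamma ((j : ℝ) + θ / a) * Real.Gamma (1 + θ) /
      (Real.Gamma (1 + θ / a) * Real.Gamma (((∑ i, m i : ℕ) : ℝ) + θ))) *
    ∏ i, Real.Gamma ((m i : ℝ) - a) / Real.Gamma (1 - a)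

set_option maxHeartbeats 1600000 in
/-- Joint-probability identity from the spinal Chinese-restaurant decomposition:
for `α∈(0,1)`, `γ∈(0,α)`, `k ≥ 2` positive parts `n_1,…,n_k` summing to `n` and any `i`,
`q^dec_{γ,1−α}(n−1, n−n_i)·p^PD_{α,−γ}(n_1,…,n_{i−1},n_{i+1},…,n_k)
  = C(n,n_i)·(n_iγ/n + n_i(n−n_i)(1−α−γ)/(n(n−1)))·P*_{α,γ}(n_1,…,n_k)`.
Here the number of parts is `k+2` for `k : ℕ`, encoding `k ≥ 2`. -/
theorem stmt3 (α γ : ℝ) (hα : α ∈ Set.Ioo (0 : ℝ) 1) (hγ : γ ∈ Set.Ioo (0 : ℝ) α)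
    (k : ℕ) (m : Fin (k + 2) → ℕ) (hpos : ∀ i, 0 < m i)
    (n : ℕ) (hsum : ∑ j, m j = n) (i : Fin (k + 2)) :
    qdec γ (1 - α) (n - 1) (n - m i) *
        pPD α (-γ) (fun j : Fin (k + 1) => m (i.succAbove j)) =
      (n.choose (m i) : ℝ) *
        ((m i : ℝ) * γ / n +
          (m i : ℝ) * ((n : ℝ) - (m i : ℝ)) * (1 - α - γ) / ((n : ℝ) * ((n : ℝ) - 1))) *
        Pstar α γ m := by
  obtain ⟨hα0, hα1⟩ := hα
  obtain ⟨hγ0, hγα⟩ := hγ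
  have hγ1 : γ < 1 := hγα.trans hα1
  have hmi : 1 ≤ m i := hpos i
  set s : ℕ := ∑ j : Fin (k+1), m (i.succAbove j) with hsdef
  have hs1 : 1 ≤ s := by
    have : 0 < s := Finset.sum_pos (fun j _ => hpos _) Finset.univ_nonempty
    omega
  have hn : n = m i + s := by rw [← hsum, Fin.sum_univ_succAbove m i]
  have hn2 : 2 ≤ n := by omega
  have hchooseN : (n-1).choose (n - m i) * n = n.choose (m i) * m i := by
    have h1 : n - m i = (n-1) - (m i - 1) := by omega
    have h2 : m i - 1 ≤ n - 1 := by omega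
    rw [h1, Nat.choose_symm h2]
    have h := Nat.add_one_mul_choose_eq (n-1) (m i - 1)
    have e1 : n - 1 + 1 = n := by omega
    have e2 : m i - 1 + 1 = m i := by omega
    rw [e1, e2] at h
    exact (Nat.mul_comm _ _).trans h
  have hn0 : (n : ℝ) ≠ 0 := by positivity
  have hn2R : (2:ℝ) ≤ (n:ℝ) := by exact_mod_cast hn2
  have hn1 : (n:ℝ) - 1 ≠ 0 := by linarith
  have hchR : (((n-1).choose (n - m i) : ℕ) : ℝ) = (n.choose (m i) : ℝ) * m i / n := by
    field_simp
    exact_mod_cast hchooseN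
  have G : ∀ x : ℝ, 0 < x → Real.Gamma x ≠ 0 := fun x hx => (Real.Gamma_pos_of_pos hx).ne'
  have g1 : Real.Gamma (1 - γ) ≠ 0 := G _ (by linarith)
  have g2 : Real.Gamma (1 - α) ≠ 0 := G _ (by linarith)
  have g3 : Real.Gamma ((s:ℝ) - γ) ≠ 0 := by
    refine G _ ?_
    have : (1:ℝ) ≤ (s:ℝ) := by exact_mod_cast hs1
    linarith
  have g4 : Real.Gamma (1 - γ/α) ≠ 0 := by
    refine G _ ?_
    have : γ/α < 1 := (div_lt_one hα0).2 hγα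
    linarith
  have g5 : Real.Gamma ((n:ℝ) - α) ≠ 0 := G _ (by linarith)
  have hα0' : α ≠ 0 := hα0.ne'
  have hnR : (n:ℝ) = (m i : ℝ) + (s : ℝ) := by exact_mod_cast hn
  have hsR : (s:ℝ) = (n:ℝ) - (m i:ℝ) := by rw [hnR]; ring
  have key : qdec γ (1 - α) (n - 1) (n - m i) *
        pPD α (-γ) (fun j : Fin (k + 1) => m (i.succAbove j)) =
      (((n-1).choose (n - m i) : ℝ) *
        (((((n:ℝ)-1) - ((n:ℝ)-(m i:ℝ)))) * γ + ((n:ℝ) - (m i:ℝ)) * (1 - α)) / ((n:ℝ) - 1)) *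
        Pstar α γ m := by
    simp only [qdec, pPD, Pstar, ← hsdef, hsum, Nat.add_sub_cancel]
    rw [Fin.prod_univ_succAbove (fun j => Real.Gamma ((m j : ℝ) - α) / Real.Gamma (1 - α)) i]
    rw [Nat.cast_sub (by omega : 1 ≤ n), Nat.cast_sub (by omega : m i ≤ n), Nat.cast_one]
    have e3 : ((n:ℝ) - 1) - ((n:ℝ) - (m i : ℝ)) + (1 - α) = (m i : ℝ) - α := by ring
    have e4 : ((n:ℝ) - 1) + (1 - α) = (n:ℝ) - α := by ring
    have e5 : (1 : ℝ) + (-γ) = 1 - γ := by ring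
    have e6 : ((s:ℝ)) + (-γ) = (s:ℝ) - γ := by ring
    have e7 : (1:ℝ) + (-γ)/α = 1 - γ/α := by ring
    have e8 : ((k:ℝ)+1) + (-γ)/α = ((k:ℝ)+2) - 1 - γ/α := by ring
    push_cast
    rw [e3, e4, e5, e6, e7, e8, hsR]
    set P : ℝ := ∏ x : Fin (k+1), Real.Gamma ((m (i.succAbove x) : ℝ) - α) / Real.Gamma (1 - α) with hP
    rw [hsR] at g3
    obtain ⟨T, hT⟩ : ∃ T, (n:ℝ) - 1 = T := ⟨_, rfl⟩
    have hT0 : T ≠ 0 := hT ▸ hn1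
    rw [hT]
    have g3' : Real.Gamma ((n:ℝ) + (-(m i:ℝ) - γ)) ≠ 0 := by
      rwa [show (n:ℝ) + (-(m i:ℝ) - γ) = (n:ℝ) - (m i:ℝ) - γ by ring]
    have g4' : Real.Gamma (-(γ * α⁻¹) + α * α⁻¹) ≠ 0 := by
      rwa [show -(γ * α⁻¹) + α * α⁻¹ = 1 - γ/α by
        rw [mul_inv_cancel₀ hα0', div_eq_mul_inv]; ring]
    have g4'' : Real.Gamma ((α - γ)/α) ≠ 0 := by
      rwa [show (α - γ)/α = 1 - γ/α by field_simp]
    field_simp [hT0, g1, g2, g3, g3', g4, g4', g4'', g5]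
  rw [key, hchR]
  have coeff : (n.choose (m i) : ℝ) * (m i:ℝ) / (n:ℝ) *
        (((((n:ℝ)-1) - ((n:ℝ)-(m i:ℝ)))) * γ + ((n:ℝ) - (m i:ℝ)) * (1 - α)) / ((n:ℝ) - 1) =
      (n.choose (m i) : ℝ) *
        ((m i : ℝ) * γ / n +
          (m i : ℝ) * ((n : ℝ) - (m i : ℝ)) * (1 - α - γ) / ((n : ℝ) * ((n : ℝ) - 1))) := by
    field_simp
    ring
  rw [coeff]
end

section
/- Fix α∈(0,1) and γ∈(0,α). Let k≥2 and let n_1,…,n_k be positive integers with sum n. Then Σ_{i=1}^k C(n, n_i)^{−1}·q^dec_{γ,1−α}(n−1, n−n_i)·p^PD_{α,−γ}(n_1,…,n_{i−1},n_{i+1},…,n_k) = (γ + (1−α−γ)·(Σ_{i≠j} n_i n_j)/(n(n−1)))·P*_{α,γ}(n_1,…,n_k) = p^seq_{α,γ}(n_1,…,n_k). (This summation identity is the analytic core of Proposition 1(a): it identifies the splitting rule of the alpha-gamma trees.) -/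
set_option maxHeartbeats 1000000


open scoped BigOperators

/-- Per-term identity: each summand of the splitting rule equals
`P*_{α,γ}(m) · mᵢ((mᵢ−1)γ+(n−mᵢ)(1−α))/(n(n−1))`. -/
lemma term_eq (α γ : ℝ) (hα0 : 0 < α) (hα1 : α < 1) (hγ0 : 0 < γ) (hγα : γ < α)
    (k : ℕ) (m : Fin (k + 2) → ℕ) (hpos : ∀ i, 0 < m i) (n : ℕ) (hsum : ∑ j, m j = n)
    (i : Fin (k + 2)) :
    ((n.choose (m i) : ℝ))⁻¹ * qdec γ (1 - α) (n - 1) (n - m i) *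
        pPD α (-γ) (fun j : Fin (k + 1) => m (i.succAbove j)) =
      ((m i : ℝ) * (((m i : ℝ) - 1) * γ + ((n : ℝ) - (m i : ℝ)) * (1 - α)) /
        ((n : ℝ) * ((n : ℝ) - 1))) * Pstar α γ m := by
  have hsplit := Fin.sum_univ_succAbove m i
  have hrestge : k + 1 ≤ ∑ j : Fin (k + 1), m (i.succAbove j) := by
    calc (k + 1 : ℕ) = ∑ _j : Fin (k + 1), 1 := by simp
    _ ≤ ∑ j : Fin (k + 1), m (i.succAbove j) :=
      Finset.sum_le_sum (fun j _ => hpos (i.succAbove j))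
  have hmi1 : 1 ≤ m i := hpos i
  have hn' : n = m i + ∑ j : Fin (k + 1), m (i.succAbove j) := by rw [← hsum, hsplit]
  have hmin : m i + k + 1 ≤ n := by omega
  have hrest : ∑ j : Fin (k + 1), m (i.succAbove j) = n - m i := by omega
  have hn2 : 2 ≤ n := by omega
  -- casts
  have c1 : ((n - 1 : ℕ) : ℝ) = (n : ℝ) - 1 := by
    rw [Nat.cast_sub (by omega)]; norm_num
  have c2 : ((n - m i : ℕ) : ℝ) = (n : ℝ) - (m i : ℝ) := by
    rw [Nat.cast_sub (by omega)]
  -- choose identity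
  have hchooseN : n * ((n-1).choose (n - m i)) = n.choose (m i) * m i := by
    have h1 : (n-1).choose (n - m i) = (n-1).choose (m i - 1) := by
      have e : n - m i = (n-1) - (m i - 1) := by omega
      rw [e, Nat.choose_symm (by omega)]
    have h2 := Nat.add_one_mul_choose_eq (n-1) (m i - 1)
    have e1 : n - 1 + 1 = n := by omega
    have e2 : m i - 1 + 1 = m i := by omega
    rw [e1, e2] at h2
    rw [h1, h2]
  have hn0 : (n : ℝ) ≠ 0 := by positivity
  have hchoose : (((n-1).choose (n - m i)) : ℝ) = (n.choose (m i) : ℝ) * (m i) / n := by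
    rw [eq_div_iff hn0]
    exact_mod_cast (by rw [mul_comm]; exact hchooseN : ((n-1).choose (n - m i)) * n = n.choose (m i) * m i)
  -- Gamma positivity
  have hγα' : γ / α < 1 := (div_lt_one hα0).2 hγα
  have hG2 : Real.Gamma (1 - α) ≠ 0 := (Real.Gamma_pos_of_pos (by linarith)).ne'
  have hG3 : Real.Gamma (1 - γ) ≠ 0 := (Real.Gamma_pos_of_pos (by linarith)).ne'
  have hG4 : Real.Gamma (1 - γ / α) ≠ 0 := (Real.Gamma_pos_of_pos (by linarith)).ne'
  have hncast : (2 : ℝ) ≤ (n : ℝ) := by exact_mod_cast hn2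
  have hmicast : (1 : ℝ) ≤ (m i : ℝ) := by exact_mod_cast hmi1
  have hnmicast : (m i : ℝ) + 1 ≤ (n : ℝ) := by exact_mod_cast (by omega : m i + 1 ≤ n)
  have hG5 : Real.Gamma ((n : ℝ) - α) ≠ 0 := (Real.Gamma_pos_of_pos (by linarith)).ne'
  have hG6 : Real.Gamma ((n : ℝ) - (m i : ℝ) - γ) ≠ 0 :=
    (Real.Gamma_pos_of_pos (by linarith)).ne'
  have hn1 : (n : ℝ) - 1 ≠ 0 := by linarith
  have hch : (n.choose (m i) : ℝ) ≠ 0 := by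
    exact_mod_cast (Nat.choose_pos (by omega : m i ≤ n)).ne'
  -- unfold
  rw [qdec, pPD, Pstar, hrest, c1, c2, hchoose, hsum]
  rw [Fin.prod_univ_succAbove (fun j => Real.Gamma ((m j : ℝ) - α) / Real.Gamma (1 - α)) i]
  have e3 : ((n:ℝ) - 1 - ((n:ℝ) - (m i:ℝ)) + (1 - α)) = (m i : ℝ) - α := by ring
  have e4 : ((n:ℝ) - 1 + (1 - α)) = (n:ℝ) - α := by ring
  have e5 : ((k + 1 : ℕ) : ℝ) + (-γ) / α = ((k + 2 : ℕ) : ℝ) - 1 - γ / α := by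
    push_cast; ring
  have e6 : (1 : ℝ) + -γ = 1 - γ := by ring
  have e7 : (1 : ℝ) + (-γ) / α = 1 - γ / α := by ring
  have e8 : (n:ℝ) - (m i:ℝ) + (-γ) = (n:ℝ) - (m i:ℝ) - γ := by ring
  rw [e3, e4, e5, e6, e7, e8]
  have e9 : k + 1 - 1 = k := by omega
  have e10 : k + 2 - 2 = k := by omega
  rw [e9, e10]
  simp only [Finset.prod_div_distrib, Finset.prod_const, Finset.card_univ, Fintype.card_fin]
  set A := Real.Gamma (1 - α) with hA
  set B := Real.Gamma (1 - γ) with hB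
  set C := Real.Gamma (1 - γ / α) with hC
  set D := Real.Gamma ((n : ℝ) - α) with hD
  set E := Real.Gamma ((n : ℝ) - (m i : ℝ) - γ) with hE
  set F := Real.Gamma (((k + 2 : ℕ) : ℝ) - 1 - γ / α) with hF
  set G := Real.Gamma ((m i : ℝ) - α) with hG
  set P := ∏ j : Fin (k + 1), Real.Gamma ((m (i.succAbove j) : ℝ) - α) with hP
  field_simp
  ring

/-- Analytic core of Proposition 1(a): for `α∈(0,1)`, `γ∈(0,α)`, `k ≥ 2` positive parts
`n_1,…,n_k` summing to `n`,
`Σ_i C(n,n_i)⁻¹·q^dec_{γ,1−α}(n−1,n−n_i)·p^PD_{α,−γ}(n_1,…,n_{i−1},n_{i+1},…,n_k)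
  = (γ + (1−α−γ)·(Σ_{i≠j} n_i n_j)/(n(n−1)))·P*_{α,γ}(n_1,…,n_k) = p^seq_{α,γ}(n_1,…,n_k)`.
Here the number of parts is `k+2` for `k : ℕ`, encoding `k ≥ 2`. -/
theorem stmt4 (α γ : ℝ) (hα : α ∈ Set.Ioo (0 : ℝ) 1) (hγ : γ ∈ Set.Ioo (0 : ℝ) α)
    (k : ℕ) (m : Fin (k + 2) → ℕ) (hpos : ∀ i, 0 < m i)
    (n : ℕ) (hsum : ∑ j, m j = n) :
    (∑ i, ((n.choose (m i) : ℝ))⁻¹ * qdec γ (1 - α) (n - 1) (n - m i) *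
        pPD α (-γ) (fun j : Fin (k + 1) => m (i.succAbove j))) =
      (γ + (1 - α - γ) *
          (∑ i, ∑ j, if i ≠ j then (m i : ℝ) * (m j : ℝ) else 0) /
          ((n : ℝ) * ((n : ℝ) - 1))) * Pstar α γ m ∧
    (∑ i, ((n.choose (m i) : ℝ))⁻¹ * qdec γ (1 - α) (n - 1) (n - m i) *
        pPD α (-γ) (fun j : Fin (k + 1) => m (i.succAbove j))) = pseq α γ m := by
  obtain ⟨hα0, hα1⟩ := hα
  obtain ⟨hγ0, hγα⟩ := hγ
  have hn2 : 2 ≤ n := by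
    have h : ∑ _j : Fin (k + 2), 1 ≤ ∑ j, m j :=
      Finset.sum_le_sum (fun j _ => hpos j)
    simp at h
    omega
  have hsum' : ∑ i, (m i : ℝ) = (n : ℝ) := by
    have := congrArg (Nat.cast : ℕ → ℝ) hsum
    push_cast at this
    exact this
  have hncast : (2 : ℝ) ≤ (n : ℝ) := by exact_mod_cast hn2
  have hn0 : (n : ℝ) ≠ 0 := by positivity
  have hn1 : (n : ℝ) - 1 ≠ 0 := by linarith
  have hL : (∑ i, ((n.choose (m i) : ℝ))⁻¹ * qdec γ (1 - α) (n - 1) (n - m i) *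
        pPD α (-γ) (fun j : Fin (k + 1) => m (i.succAbove j))) =
      ((∑ i, (m i : ℝ) * (((m i : ℝ) - 1) * γ + ((n : ℝ) - (m i : ℝ)) * (1 - α))) /
        ((n : ℝ) * ((n : ℝ) - 1))) * Pstar α γ m := by
    rw [Finset.sum_congr rfl
      (fun i _ => term_eq α γ hα0 hα1 hγ0 hγα k m hpos n hsum i)]
    rw [← Finset.sum_mul, ← Finset.sum_div]
  have hS : (∑ i, ∑ j, if i ≠ j then (m i : ℝ) * (m j : ℝ) else 0)
      = (n : ℝ) * (n : ℝ) - ∑ i, (m i : ℝ) ^ 2 := by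
    have h1 : ∀ i : Fin (k + 2),
        (∑ j, if i ≠ j then (m i : ℝ) * (m j : ℝ) else 0)
          = (m i : ℝ) * (n : ℝ) - (m i : ℝ) ^ 2 := by
      intro i
      have h2 : (∑ j, if i ≠ j then (m i : ℝ) * (m j : ℝ) else 0)
          = (∑ j, (m i : ℝ) * (m j : ℝ)) -
            ∑ j, if i = j then (m i : ℝ) * (m j : ℝ) else 0 := by
        rw [← Finset.sum_sub_distrib]
        refine Finset.sum_congr rfl fun j _ => ?_
        by_cases h : i = j <;> simp [h]
      rw [h2, Finset.sum_ite_eq, ← Finset.mul_sum, hsum']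
      simp
      ring
    rw [Finset.sum_congr rfl (fun i _ => h1 i), Finset.sum_sub_distrib,
      ← Finset.sum_mul, hsum']
  have hnum : (∑ i, (m i : ℝ) * (((m i : ℝ) - 1) * γ + ((n : ℝ) - (m i : ℝ)) * (1 - α)))
      = γ * ((n : ℝ) * ((n : ℝ) - 1)) +
        (1 - α - γ) * (∑ i, ∑ j, if i ≠ j then (m i : ℝ) * (m j : ℝ) else 0) := by
    rw [hS]
    have expand : ∀ i : Fin (k + 2),
        (m i : ℝ) * (((m i : ℝ) - 1) * γ + ((n : ℝ) - (m i : ℝ)) * (1 - α))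
          = (γ - (1 - α)) * (m i : ℝ) ^ 2 + ((1 - α) * (n : ℝ) - γ) * (m i : ℝ) :=
      fun i => by ring
    rw [Finset.sum_congr rfl (fun i _ => expand i), Finset.sum_add_distrib,
      ← Finset.mul_sum, ← Finset.mul_sum, hsum']
    ring
  have hmain : (∑ i, ((n.choose (m i) : ℝ))⁻¹ * qdec γ (1 - α) (n - 1) (n - m i) *
        pPD α (-γ) (fun j : Fin (k + 1) => m (i.succAbove j))) =
      (γ + (1 - α - γ) *
          (∑ i, ∑ j, if i ≠ j then (m i : ℝ) * (m j : ℝ) else 0) /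
          ((n : ℝ) * ((n : ℝ) - 1))) * Pstar α γ m := by
    rw [hL, hnum]
    congr 1
    field_simp
  refine ⟨hmain, ?_⟩
  rw [pseq, hsum]
  exact hmain
end

section
/- Fix α∈(0,1), γ∈(0,α) and an integer n≥3. Let k≥2, let n_1,…,n_k be positive integers with sum n−1, and let i∈{1,…,k}. Then p^seq_{α,γ}(n_1,…,n_i+1,…,n_k) = ((n_i−α)/(n−1−α))·( p^seq_{α,γ}(n_1,…,n_k) + 2(1−α−γ)·((n−2)(n−1−n_i) − Σ_{u≠v} n_u n_v)/(n(n−1)(n−2))·P*_{α,γ}(n_1,…,n_k) ), where Σ_{u≠v} ranges over ordered pairs u≠v in {1,…,k}. -/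
open scoped BigOperators

lemma sum_sq_aux {k : ℕ} (f : Fin k → ℝ) :
    ∑ u, ∑ v, (if u ≠ v then f u * f v else 0) = (∑ u, f u)^2 - ∑ u, f u ^ 2 := by
  have h : ∀ u : Fin k, ∑ v, (if u ≠ v then f u * f v else 0)
      = f u * (∑ v, f v) - f u ^ 2 := by
    intro u
    have h2 : ∀ v, (if u ≠ v then f u * f v else 0)
        = f u * f v - (if u = v then f u * f v else 0) := by
      intro v; by_cases h : u = v <;> simp [h]
    simp_rw [h2, Finset.sum_sub_distrib, Finset.sum_ite_eq, Finset.mem_univ, if_pos,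
      ← Finset.mul_sum, sq]
  simp_rw [h, Finset.sum_sub_distrib, ← Finset.sum_mul, sq]


lemma stmt8_alg (γ α N Q M P : ℝ) (h1 : N ≠ 0) (h2 : N - 1 ≠ 0) (h3 : N - 2 ≠ 0)
    (h4 : N - 1 - α ≠ 0) :
    (γ + (1 - α - γ) * (N ^ 2 - (Q + 2 * M + 1)) / (N * (N - 1))) * ((M - α) / (N - 1 - α) * P) =
    (M - α) / (N - 1 - α) *
      ((γ + (1 - α - γ) * ((N - 1) ^ 2 - Q) / ((N - 1) * (N - 1 - 1))) * P +
        2 * (1 - α - γ) * ((N - 2) * (N - 1 - M) - ((N - 1) ^ 2 - Q)) /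
          (N * (N - 1) * (N - 2)) * P) := by
  have h2' : N - 1 - 1 ≠ 0 := by intro h; apply h3; linarith
  field_simp
  ring

set_option maxHeartbeats 1000000 in
/-- Intermediate identity in the proof of sampling consistency: for parts summing to `n−1`,
`p^seq(n_1,…,n_i+1,…,n_k) = ((n_i−α)/(n−1−α))·(p^seq(n_1,…,n_k)
   + 2(1−α−γ)·((n−2)(n−1−n_i) − Σ_{u≠v}n_u n_v)/(n(n−1)(n−2))·P*(n_1,…,n_k))`. -/
theorem stmt8 (α γ : ℝ) (hα : α ∈ Set.Ioo (0 : ℝ) 1) (hγ : γ ∈ Set.Ioo (0 : ℝ) α)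
    (n : ℕ) (hn : 3 ≤ n) (k : ℕ) (hk : 2 ≤ k) (m : Fin k → ℕ)
    (hpos : ∀ i, 0 < m i) (hsum : ∑ i, m i = n - 1) (i : Fin k) :
    pseq α γ (Function.update m i (m i + 1)) =
      (((m i : ℝ) - α) / ((n : ℝ) - 1 - α)) *
        (pseq α γ m +
          2 * (1 - α - γ) *
            (((n : ℝ) - 2) * ((n : ℝ) - 1 - (m i : ℝ)) -
              ∑ u, ∑ v, if u ≠ v then (m u : ℝ) * (m v : ℝ) else 0) /
            ((n : ℝ) * ((n : ℝ) - 1) * ((n : ℝ) - 2)) * Pstar α γ m) := by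
  obtain ⟨hα0, hα1⟩ := hα
  set m' := Function.update m i (m i + 1) with hm'
  -- natural number sums
  have hsum' : ∑ j, m' j = n := by
    rw [hm', Finset.sum_update_of_mem (Finset.mem_univ i), Finset.sdiff_singleton_eq_erase]
    have := Finset.add_sum_erase Finset.univ m (Finset.mem_univ i)
    omega
  -- real casts
  have hSR : ((∑ j, m j : ℕ) : ℝ) = (n : ℝ) - 1 := by
    rw [hsum]; push_cast [Nat.cast_sub (by omega : 1 ≤ n)]; ring
  have hSR' : ((∑ j, m' j : ℕ) : ℝ) = (n : ℝ) := by rw [hsum']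
  have hsumcast : ∑ j, ((m j : ℝ)) = (n : ℝ) - 1 := by
    rw [← hSR]; push_cast; rfl
  have hsumcast' : ∑ j, ((m' j : ℝ)) = (n : ℝ) := by
    rw [← hSR']; push_cast; rfl
  -- positivity facts
  have hmi : (1 : ℝ) ≤ (m i : ℝ) := by exact_mod_cast hpos i
  have hmiα : (0 : ℝ) < (m i : ℝ) - α := by linarith
  have hnα : (0 : ℝ) < (n : ℝ) - 1 - α := by
    have : (3 : ℝ) ≤ (n : ℝ) := by exact_mod_cast hn
    linarith
  -- Gamma product identity
  have hGprod : ∏ j, Real.Gamma ((m' j : ℝ) - α)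
      = ((m i : ℝ) - α) * ∏ j, Real.Gamma ((m j : ℝ) - α) := by
    have hfun : (fun j => Real.Gamma ((m' j : ℝ) - α))
        = Function.update (fun j => Real.Gamma ((m j : ℝ) - α)) i
            (Real.Gamma (((m i + 1 : ℕ) : ℝ) - α)) := by
      funext j
      exact Function.apply_update (β := fun _ => ℝ) (fun _ (x : ℕ) => Real.Gamma ((x : ℝ) - α)) m i (m i + 1) j
    rw [hfun, Finset.prod_update_of_mem (Finset.mem_univ i)]
    have hc : ((m i + 1 : ℕ) : ℝ) - α = ((m i : ℝ) - α) + 1 := by push_cast; ring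
    rw [Finset.sdiff_singleton_eq_erase, hc, Real.Gamma_add_one (ne_of_gt hmiα), mul_assoc]
    congr 1
    exact Finset.mul_prod_erase Finset.univ (fun j => Real.Gamma ((m j : ℝ) - α))
      (Finset.mem_univ i)
  -- Gamma denominator identity
  have hGden : Real.Gamma (((∑ j, m' j : ℕ) : ℝ) - α)
      = ((n : ℝ) - 1 - α) * Real.Gamma (((∑ j, m j : ℕ) : ℝ) - α) := by
    rw [hSR', hSR]
    have hc : (n : ℝ) - α = ((n : ℝ) - 1 - α) + 1 := by ring
    rw [hc, Real.Gamma_add_one (ne_of_gt hnα)]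
  -- Pstar identity
  have hΓpos : Real.Gamma (1 - α) > 0 := Real.Gamma_pos_of_pos (by linarith)
  have hPstar : Pstar α γ m' = (((m i : ℝ) - α) / ((n : ℝ) - 1 - α)) * Pstar α γ m := by
    unfold Pstar
    rw [Finset.prod_div_distrib, Finset.prod_div_distrib, hGprod, hGden]
    field_simp
  -- sums of squares
  have hQ' : ∑ u, ((m' u : ℝ)) ^ 2 = (∑ u, ((m u : ℝ)) ^ 2) + 2 * (m i : ℝ) + 1 := by
    have hfun : (fun u => ((m' u : ℝ)) ^ 2)
        = Function.update (fun u => ((m u : ℝ)) ^ 2) i (((m i + 1 : ℕ) : ℝ) ^ 2) := by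
      funext j
      exact Function.apply_update (β := fun _ => ℝ) (fun _ (x : ℕ) => ((x : ℝ)) ^ 2) m i (m i + 1) j
    rw [hfun, Finset.sum_update_of_mem (Finset.mem_univ i), Finset.sdiff_singleton_eq_erase]
    have h2 := Finset.add_sum_erase Finset.univ (fun u => ((m u : ℝ)) ^ 2) (Finset.mem_univ i)
    push_cast
    push_cast at h2
    nlinarith [h2]
  -- double sums via sum of squares
  have hT : ∑ u, ∑ v, (if u ≠ v then (m u : ℝ) * (m v : ℝ) else 0)
      = ((n : ℝ) - 1) ^ 2 - ∑ u, ((m u : ℝ)) ^ 2 := by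
    rw [sum_sq_aux, hsumcast]
  have hT' : ∑ u, ∑ v, (if u ≠ v then (m' u : ℝ) * (m' v : ℝ) else 0)
      = (n : ℝ) ^ 2 - ((∑ u, ((m u : ℝ)) ^ 2) + 2 * (m i : ℝ) + 1) := by
    rw [sum_sq_aux, hsumcast', hQ']
  -- final algebra
  set Q := ∑ u, ((m u : ℝ)) ^ 2 with hQ
  have hn3 : (3 : ℝ) ≤ (n : ℝ) := by exact_mod_cast hn
  have h1 : (n : ℝ) ≠ 0 := by linarith
  have h2 : (n : ℝ) - 1 ≠ 0 := by linarith
  have h3 : (n : ℝ) - 2 ≠ 0 := by linarith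
  have h4 : (n : ℝ) - 1 - α ≠ 0 := ne_of_gt hnα
  unfold pseq
  rw [hPstar, hT', hT, hSR', hSR]
  exact stmt8_alg γ α (n : ℝ) Q ((m i : ℝ)) (Pstar α γ m) h1 h2 h3 h4
end

section
/- Fix α∈(0,1), γ∈(0,α) and an integer n≥3. Let k≥2 and let n_1,…,n_k be positive integers with sum n−1. Then p^seq_{α,γ}(n_1,…,n_k,1) = (((k−1)α−γ)/(n−1−α))·( p^seq_{α,γ}(n_1,…,n_k) + 2(1−α−γ)·((n−1)(n−2) − Σ_{u≠v} n_u n_v)/(n(n−1)(n−2))·P*_{α,γ}(n_1,…,n_k) ), where Σ_{u≠v} ranges over ordered pairs u≠v in {1,…,k}. -/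
open scoped BigOperators

/-- Intermediate identity in the proof of sampling consistency: for parts summing to `n−1`,
`p^seq(n_1,…,n_k,1) = (((k−1)α−γ)/(n−1−α))·(p^seq(n_1,…,n_k)
   + 2(1−α−γ)·((n−1)(n−2) − Σ_{u≠v}n_u n_v)/(n(n−1)(n−2))·P*(n_1,…,n_k))`. -/
theorem stmt9 (α γ : ℝ) (hα : α ∈ Set.Ioo (0 : ℝ) 1) (hγ : γ ∈ Set.Ioo (0 : ℝ) α)
    (n : ℕ) (hn : 3 ≤ n) (k : ℕ) (hk : 2 ≤ k) (m : Fin k → ℕ)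
    (hpos : ∀ i, 0 < m i) (hsum : ∑ i, m i = n - 1) :
    pseq α γ (Fin.snoc m 1) =
      ((((k : ℝ) - 1) * α - γ) / ((n : ℝ) - 1 - α)) *
        (pseq α γ m +
          2 * (1 - α - γ) *
            (((n : ℝ) - 1) * ((n : ℝ) - 2) -
              ∑ u, ∑ v, if u ≠ v then (m u : ℝ) * (m v : ℝ) else 0) /
            ((n : ℝ) * ((n : ℝ) - 1) * ((n : ℝ) - 2)) * Pstar α γ m) := by
  obtain ⟨hα0, hα1⟩ := hα
  obtain ⟨hγ0, hγα⟩ := hγ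
  have hαne : α ≠ 0 := ne_of_gt hα0
  have hkR : (2:ℝ) ≤ (k:ℝ) := by exact_mod_cast hk
  have hnR : (3:ℝ) ≤ (n:ℝ) := by exact_mod_cast hn
  have hdiv : γ / α < 1 := (div_lt_one hα0).2 hγα
  have hx1 : (0:ℝ) < (k:ℝ) - 1 - γ/α := by linarith
  have hx2 : (0:ℝ) < (n:ℝ) - 1 - α := by linarith
  have hsumsnoc : (∑ j, (Fin.snoc m 1 : Fin (k+1) → ℕ) j) = n := by
    rw [Fin.sum_univ_castSucc]
    simp only [Fin.snoc_castSucc, Fin.snoc_last, hsum]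
    omega
  have hScast : ((∑ j, m j : ℕ) : ℝ) = (n:ℝ) - 1 := by
    rw [hsum]; push_cast [Nat.one_le_iff_ne_zero.2 (by omega : n ≠ 0)]; ring
  have hmm : (∑ i, (m i : ℝ)) = (n:ℝ) - 1 := by
    rw [← Nat.cast_sum, hScast]
  set Q : ℝ := ∑ u, ∑ v, if u ≠ v then (m u : ℝ) * (m v : ℝ) else 0 with hQdef
  have hQ' : (∑ i, ∑ j, if i ≠ j then ((Fin.snoc m 1 : Fin (k+1) → ℕ) i : ℝ) *
      ((Fin.snoc m 1 : Fin (k+1) → ℕ) j : ℝ) else 0) = Q + 2*((n:ℝ)-1) := by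
    rw [Fin.sum_univ_castSucc]
    have inner : ∀ i : Fin k, (∑ j : Fin (k+1), if (Fin.castSucc i) ≠ j then
        ((Fin.snoc m 1 : Fin (k+1) → ℕ) (Fin.castSucc i) : ℝ) *
        ((Fin.snoc m 1 : Fin (k+1) → ℕ) j : ℝ) else 0)
        = (∑ j : Fin k, if i ≠ j then (m i : ℝ) * (m j : ℝ) else 0) + (m i : ℝ) := by
      intro i
      rw [Fin.sum_univ_castSucc]
      simp [Fin.snoc_castSucc, Fin.snoc_last, Fin.castSucc_inj,
        (Fin.castSucc_lt_last i).ne]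
    have last : (∑ j : Fin (k+1), if (Fin.last k) ≠ j then
        ((Fin.snoc m 1 : Fin (k+1) → ℕ) (Fin.last k) : ℝ) *
        ((Fin.snoc m 1 : Fin (k+1) → ℕ) j : ℝ) else 0) = (n:ℝ) - 1 := by
      rw [Fin.sum_univ_castSucc]
      simp only [Fin.snoc_castSucc, Fin.snoc_last, Nat.cast_one, one_mul]
      rw [if_neg (by simp)]
      have : ∀ j : Fin k, Fin.last k ≠ Fin.castSucc j := fun j =>
        (Fin.castSucc_lt_last j).ne'
      rw [Finset.sum_congr rfl fun j _ => if_pos (this j)]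
      simpa using hmm
    simp only [inner, last, Finset.sum_add_distrib, hmm, ← hQdef]
    ring
  have hG0 : (0:ℝ) < Real.Gamma (1 - γ/α) := Real.Gamma_pos_of_pos (by linarith)
  have hG : (0:ℝ) < Real.Gamma (1 - α) := Real.Gamma_pos_of_pos (by linarith)
  have hGn : (0:ℝ) < Real.Gamma ((n:ℝ) - 1 - α) := Real.Gamma_pos_of_pos hx2
  have hG1 : Real.Gamma (((k+1 : ℕ) : ℝ) - 1 - γ/α)
      = ((k:ℝ) - 1 - γ/α) * Real.Gamma ((k:ℝ) - 1 - γ/α) := by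
    have h : (((k+1 : ℕ) : ℝ) - 1 - γ/α) = ((k:ℝ) - 1 - γ/α) + 1 := by push_cast; ring
    rw [h, Real.Gamma_add_one (ne_of_gt hx1)]
  have hG2 : Real.Gamma ((n:ℝ) - α) = ((n:ℝ) - 1 - α) * Real.Gamma ((n:ℝ) - 1 - α) := by
    have h : ((n:ℝ) - α) = ((n:ℝ) - 1 - α) + 1 := by ring
    rw [h, Real.Gamma_add_one (ne_of_gt hx2)]
  have hprod : (∏ j : Fin (k+1), Real.Gamma (((Fin.snoc m 1 : Fin (k+1) → ℕ) j : ℝ) - α)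
        / Real.Gamma (1 - α))
      = ∏ j : Fin k, Real.Gamma ((m j : ℝ) - α) / Real.Gamma (1 - α) := by
    rw [Fin.prod_univ_castSucc]
    simp [Fin.snoc_castSucc, Fin.snoc_last, div_self hG.ne']
  have hpow : α ^ ((k+1) - 2) = α * α ^ (k - 2) := by
    have h : (k+1) - 2 = (k - 2) + 1 := by omega
    rw [h, pow_succ]; ring
  have hPs : Pstar α γ (Fin.snoc m 1)
      = (((k:ℝ) - 1) * α - γ) / ((n:ℝ) - 1 - α) * Pstar α γ m := by
    unfold Pstar
    rw [hsumsnoc, hScast, hprod, hG1, hG2, hpow]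
    have hkγ : ((k:ℝ) - 1) * α - γ = ((k:ℝ) - 1 - γ/α) * α := by
      field_simp
    rw [hkγ]
    set t := γ/α with ht
    field_simp
  have hn0 : (n:ℝ) ≠ 0 := by linarith
  have hn1 : (n:ℝ) - 1 ≠ 0 := by linarith
  have hn2 : (n:ℝ) - 2 ≠ 0 := by linarith
  have key : (γ + (1 - α - γ) * (Q + 2*((n:ℝ)-1)) / ((n:ℝ) * ((n:ℝ)-1)))
      = (γ + (1 - α - γ) * Q / (((n:ℝ)-1) * (((n:ℝ)-1) - 1)))
        + 2 * (1 - α - γ) * (((n:ℝ)-1)*((n:ℝ)-2) - Q) / ((n:ℝ)*((n:ℝ)-1)*((n:ℝ)-2)) := by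
    have hn1' : (n:ℝ) - 1 - 1 ≠ 0 := by linarith
    field_simp
    ring
  unfold pseq
  rw [hPs, hsumsnoc, hScast, hQ', ← hQdef]
  linear_combination ((((k:ℝ) - 1) * α - γ) / ((n:ℝ) - 1 - α)) * Pstar α γ m * key
end

section
/- For every γ∈(0,1) and every integer n≥3, Σ_{k=2}^{n−1} γ·Γ(k−1−γ)/(Γ(1−γ)·(k−1)!) + Γ(n−1−γ)/(Γ(1−γ)·(n−2)!) = 1. (That is, the splitting rule of the alpha-gamma model with α=1 is a probability distribution on the possible first splits of an n-leaf tree.) -/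
open scoped BigOperators

/-- For every `γ∈(0,1)` and every integer `n ≥ 3`,
`Σ_{k=2}^{n−1} γ·Γ(k−1−γ)/(Γ(1−γ)·(k−1)!) + Γ(n−1−γ)/(Γ(1−γ)·(n−2)!) = 1`:
the splitting rule of the alpha-gamma model with `α = 1` is a probability distribution. -/
theorem stmt10 (γ : ℝ) (hγ : γ ∈ Set.Ioo (0 : ℝ) 1) (n : ℕ) (hn : 3 ≤ n) :
    (∑ k ∈ Finset.Icc 2 (n - 1),
        γ * Real.Gamma ((k : ℝ) - 1 - γ) /
          (Real.Gamma (1 - γ) * (Nat.factorial (k - 1) : ℝ))) +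
      Real.Gamma ((n : ℝ) - 1 - γ) /
        (Real.Gamma (1 - γ) * (Nat.factorial (n - 2) : ℝ)) = 1 := by
  obtain ⟨hγ0, hγ1⟩ := hγ
  have hΓpos : 0 < Real.Gamma (1 - γ) := Real.Gamma_pos_of_pos (by linarith)
  set g : ℕ → ℝ := fun j =>
    Real.Gamma ((j : ℝ) + 1 - γ) / (Real.Gamma (1 - γ) * (Nat.factorial j : ℝ)) with hg
  have hstep : ∀ j : ℕ,
      γ * Real.Gamma ((j : ℝ) + 1 - γ) /
        (Real.Gamma (1 - γ) * (Nat.factorial (j + 1) : ℝ)) = g j - g (j + 1) := by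
    intro j
    have hpos : (0 : ℝ) < (j : ℝ) + 1 - γ := by
      have : (0 : ℝ) ≤ (j : ℝ) := Nat.cast_nonneg j
      linarith
    have hΓadd : Real.Gamma ((j : ℝ) + 1 + 1 - γ)
        = ((j : ℝ) + 1 - γ) * Real.Gamma ((j : ℝ) + 1 - γ) := by
      have := Real.Gamma_add_one (ne_of_gt hpos : ((j : ℝ) + 1 - γ) ≠ 0)
      rw [← this]; ring_nf
    have hfact : (Nat.factorial (j + 1) : ℝ) = ((j : ℝ) + 1) * (Nat.factorial j : ℝ) := by
      rw [Nat.factorial_succ]; push_cast; ring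
    have hfj : (Nat.factorial j : ℝ) ≠ 0 := by
      exact_mod_cast Nat.factorial_ne_zero j
    have hj1 : ((j : ℝ) + 1) ≠ 0 := by positivity
    simp only [hg, Nat.cast_succ, hΓadd, hfact]
    field_simp
    ring
  have h2 : Finset.Icc 2 (n - 1) = Finset.Ico 2 n := by
    rw [← Finset.Ico_add_one_right_eq_Icc]
    congr 1
    omega
  have hsum : (∑ k ∈ Finset.Icc 2 (n - 1),
      γ * Real.Gamma ((k : ℝ) - 1 - γ) /
        (Real.Gamma (1 - γ) * (Nat.factorial (k - 1) : ℝ)))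
      = ∑ j ∈ Finset.range (n - 2), (g j - g (j + 1)) := by
    rw [h2, Finset.sum_Ico_eq_sum_range]
    apply Finset.sum_congr rfl
    intro j _
    have h1 : ((2 + j : ℕ) : ℝ) - 1 - γ = (j : ℝ) + 1 - γ := by push_cast; ring
    have h2' : 2 + j - 1 = j + 1 := by omega
    rw [h1, h2', hstep j]
  rw [hsum, Finset.sum_range_sub' g]
  have hg0 : g 0 = 1 := by
    simp [hg, Nat.factorial]
    field_simp
    exact hΓpos.ne'
  have hgn : g (n - 2) = Real.Gamma ((n : ℝ) - 1 - γ) /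
      (Real.Gamma (1 - γ) * (Nat.factorial (n - 2) : ℝ)) := by
    have : ((n - 2 : ℕ) : ℝ) + 1 - γ = (n : ℝ) - 1 - γ := by
      have : ((n - 2 : ℕ) : ℝ) = (n : ℝ) - 2 := by
        have hn2 : 2 ≤ n := by omega
        push_cast [Nat.cast_sub hn2]
        ring
      rw [this]; ring
    simp [hg, this]
  rw [hg0, hgn]
  ring
end

section
/- For every γ∈(0,1) and every integer n≥2, Γ(n−1−γ)/(Γ(1−γ)·(n−2)!) = (Γ(n+1−γ)/(Γ(1−γ)·n!))·( ∫_0^1 (n·s·(1−s)^{n−1} + (1−s)^n)·γ(1−s)^{−1−γ} ds + 1 ), where the integral is a Lebesgue integral on (0,1). -/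
open MeasureTheory

lemma aux_intg_stmt12 (b : ℝ) (hb : -1 < b) :
    MeasureTheory.IntegrableOn (fun s : ℝ => (1 - s) ^ b) (Set.Ioo (0:ℝ) 1) := by
  have h : IntervalIntegrable (fun x : ℝ => x ^ b) MeasureTheory.volume 0 1 :=
    intervalIntegral.intervalIntegrable_rpow' hb
  have h2 := h.comp_sub_left 1
  simp only [sub_zero, sub_self] at h2
  have h3 := h2.symm
  rwa [intervalIntegrable_iff_integrableOn_Ioo_of_le (by norm_num)] at h3

lemma aux_int_stmt12 (b : ℝ) (hb : -1 < b) :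
    ∫ s in Set.Ioo (0:ℝ) 1, (1 - s) ^ b = 1 / (b + 1) := by
  rw [← MeasureTheory.integral_Ioc_eq_integral_Ioo,
    ← intervalIntegral.integral_of_le (by norm_num : (0:ℝ) ≤ 1)]
  have := intervalIntegral.integral_comp_sub_left (a := 0) (b := 1) (fun x : ℝ => x ^ b) 1
  simp only [sub_zero, sub_self] at this
  rw [this, integral_rpow (Or.inl hb), Real.one_rpow, Real.zero_rpow (by linarith)]
  ring

/-- For `γ∈(0,1)` and every integer `n ≥ 2`,
`Γ(n−1−γ)/(Γ(1−γ)·(n−2)!)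
  = (Γ(n+1−γ)/(Γ(1−γ)·n!))·(∫_0^1 (n·s·(1−s)^{n−1} + (1−s)^n)·γ(1−s)^{−1−γ} ds + 1)`,
expressing the `α = 1` splitting probability of the split into singletons via the
dislocation measure `γ(1−s)^{−1−γ}ds + δ_0`. -/
theorem stmt12 (γ : ℝ) (hγ : γ ∈ Set.Ioo (0 : ℝ) 1) (n : ℕ) (hn : 2 ≤ n) :
    Real.Gamma ((n : ℝ) - 1 - γ) /
        (Real.Gamma (1 - γ) * (Nat.factorial (n - 2) : ℝ)) =
      (Real.Gamma ((n : ℝ) + 1 - γ) / (Real.Gamma (1 - γ) * (Nat.factorial n : ℝ))) *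
        ((∫ s in Set.Ioo (0 : ℝ) 1,
            ((n : ℝ) * s * (1 - s) ^ (n - 1) + (1 - s) ^ n) *
              (γ * (1 - s) ^ (-1 - γ))) + 1) := by
  obtain ⟨hγ0, hγ1⟩ := hγ
  set b : ℝ := (n : ℝ) - 2 - γ with hbdef
  have hn2 : (2:ℝ) ≤ (n:ℝ) := by exact_mod_cast hn
  have hb : -1 < b := by simp only [hbdef]; linarith
  have hb1 : -1 < b + 1 := by linarith
  -- pointwise identity on Ioo
  have hcongr : Set.EqOn
      (fun s : ℝ => ((n : ℝ) * s * (1 - s) ^ (n - 1) + (1 - s) ^ n) *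
        (γ * (1 - s) ^ (-1 - γ)))
      (fun s : ℝ => (n * γ) * (1 - s) ^ b + (γ - n * γ) * (1 - s) ^ (b + 1))
      (Set.Ioo (0:ℝ) 1) := by
    intro s hs
    have h1s : (0:ℝ) < 1 - s := by linarith [hs.2]
    have e1 : (1 - s) ^ (n - 1) * (1 - s) ^ (-1 - γ) = (1 - s) ^ b := by
      rw [← Real.rpow_natCast (1 - s) (n - 1), ← Real.rpow_add h1s]
      congr 1
      rw [Nat.cast_sub (by omega : 1 ≤ n)]
      simp [hbdef]; ring
    have e2 : (1 - s) ^ n * (1 - s) ^ (-1 - γ) = (1 - s) ^ (b + 1) := by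
      rw [← Real.rpow_natCast (1 - s) n, ← Real.rpow_add h1s]
      congr 1
      simp [hbdef]; ring
    have e4 : (1 - s) ^ (b + 1) = (1 - s) * (1 - s) ^ b := by
      rw [Real.rpow_add h1s, Real.rpow_one]; ring
    simp only
    linear_combination ((n:ℝ) * s * γ) * e1 + γ * e2 + ((n:ℝ) * γ) * e4
  have hI : (∫ s in Set.Ioo (0 : ℝ) 1,
      ((n : ℝ) * s * (1 - s) ^ (n - 1) + (1 - s) ^ n) * (γ * (1 - s) ^ (-1 - γ)))
      = (n * γ) * (1 / (b + 1)) + (γ - n * γ) * (1 / (b + 2)) := by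
    rw [MeasureTheory.setIntegral_congr_fun measurableSet_Ioo hcongr,
      MeasureTheory.integral_add ((aux_intg_stmt12 b hb).const_mul _)
        ((aux_intg_stmt12 (b + 1) hb1).const_mul _),
      integral_const_mul, integral_const_mul,
      aux_int_stmt12 b hb, aux_int_stmt12 (b + 1) hb1]
    ring_nf
  rw [hI]
  -- Gamma recurrences
  have hA0 : (n:ℝ) - 1 - γ ≠ 0 := by linarith
  have hB0 : (n:ℝ) - γ ≠ 0 := by linarith
  have hG1 : Real.Gamma ((n:ℝ) + 1 - γ)
      = ((n:ℝ) - γ) * (((n:ℝ) - 1 - γ) * Real.Gamma ((n:ℝ) - 1 - γ)) := by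
    have e1 : (n:ℝ) + 1 - γ = ((n:ℝ) - γ) + 1 := by ring
    have e2 : (n:ℝ) - γ = ((n:ℝ) - 1 - γ) + 1 := by ring
    rw [e1, Real.Gamma_add_one hB0, e2, Real.Gamma_add_one hA0, ← e2]
  rw [hG1]
  have hGpos : 0 < Real.Gamma (1 - γ) := Real.Gamma_pos_of_pos (by linarith)
  obtain ⟨m, rfl⟩ : ∃ m, n = m + 2 := ⟨n - 2, by omega⟩
  have hfac : (Nat.factorial (m + 2) : ℝ)
      = ((m:ℝ) + 2) * ((m:ℝ) + 1) * (Nat.factorial m : ℝ) := by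
    rw [Nat.factorial_succ, Nat.factorial_succ]
    push_cast; ring
  have hfac2 : m + 2 - 2 = m := by omega
  rw [hfac2, hfac]
  have hfm : (Nat.factorial m : ℝ) ≠ 0 := by
    exact_mod_cast Nat.factorial_ne_zero m
  have hbp1 : b + 1 ≠ 0 := by linarith
  have hbp2 : b + 2 ≠ 0 := by linarith
  have hbeq : b = (m:ℝ) - γ := by rw [hbdef]; push_cast; ring
  rw [hbeq] at hbp1 hbp2 ⊢
  push_cast
  field_simp
  ring
end

section
/- Fix α∈(0,1), γ∈(0,α) and set θ=−α−γ. For every integer k≥1 and every x=(x_1,…,x_k)∈(0,1)^k with S := x_1+⋯+x_k < 1, ∫_0^{1−S} y·(1−S)·gem*_{α,θ;k+1}(x_1,…,x_k,y) dy = ((1−α)/(1+(k−1)α−γ))·(1−S)²·gem*_{α,θ;k}(x_1,…,x_k). -/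
open scoped BigOperators
open MeasureTheory

theorem realBeta (a b : ℝ) (ha : 0 < a) (hb : 0 < b) :
    ∫ t in Set.Ioo (0:ℝ) 1, t ^ (a - 1) * (1 - t) ^ (b - 1) =
      Real.Gamma a * Real.Gamma b / Real.Gamma (a + b) := by
  have key := Complex.Gamma_mul_Gamma_eq_betaIntegral (s := a) (t := b) (by simpa) (by simpa)
  have hI : Complex.betaIntegral a b =
      ((∫ t in Set.Ioo (0:ℝ) 1, t ^ (a - 1) * (1 - t) ^ (b - 1) : ℝ) : ℂ) := by
    rw [Complex.betaIntegral, intervalIntegral.integral_of_le zero_le_one,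
      MeasureTheory.integral_Ioc_eq_integral_Ioo]
    rw [show ((∫ t in Set.Ioo (0:ℝ) 1, t ^ (a - 1) * (1 - t) ^ (b - 1) : ℝ) : ℂ) =
      ∫ t in Set.Ioo (0:ℝ) 1, ((t ^ (a - 1) * (1 - t) ^ (b - 1) : ℝ) : ℂ) from
      (integral_ofReal).symm]
    refine setIntegral_congr_fun measurableSet_Ioo fun t ht => ?_
    obtain ⟨ht0, ht1⟩ := ht
    rw [Complex.ofReal_mul, Complex.ofReal_cpow ht0.le, Complex.ofReal_cpow (by linarith : (0:ℝ) ≤ 1 - t)]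
    push_cast
    ring
  rw [hI] at key
  have hgsum : (0:ℝ) < Real.Gamma (a + b) := Real.Gamma_pos_of_pos (by linarith)
  have h2 : Real.Gamma a * Real.Gamma b =
      Real.Gamma (a + b) * ∫ t in Set.Ioo (0:ℝ) 1, t ^ (a - 1) * (1 - t) ^ (b - 1) := by
    rw [Complex.Gamma_ofReal, Complex.Gamma_ofReal, ← Complex.ofReal_add,
      Complex.Gamma_ofReal, ← Complex.ofReal_mul, ← Complex.ofReal_mul] at key
    exact_mod_cast key
  rw [h2]
  field_simp

theorem realBetaScaled (a b c : ℝ) (ha : 0 < a) (hb : 0 < b) (hc : 0 < c) :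
    ∫ y in Set.Ioo (0:ℝ) c, y ^ (a - 1) * (c - y) ^ (b - 1) =
      c ^ (a + b - 1) * (Real.Gamma a * Real.Gamma b / Real.Gamma (a + b)) := by
  have hsub := intervalIntegral.integral_comp_mul_left
    (a := (0:ℝ)) (b := 1) (fun y => y ^ (a - 1) * (c - y) ^ (b - 1)) hc.ne'
  simp only [mul_zero, mul_one] at hsub
  have h1 : ∫ y in Set.Ioo (0:ℝ) c, y ^ (a - 1) * (c - y) ^ (b - 1) =
      ∫ y in (0:ℝ)..c, y ^ (a - 1) * (c - y) ^ (b - 1) := by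
    rw [intervalIntegral.integral_of_le hc.le, MeasureTheory.integral_Ioc_eq_integral_Ioo]
  have h2 : (∫ t in (0:ℝ)..1, (c * t) ^ (a - 1) * (c - c * t) ^ (b - 1)) =
      c ^ (a + b - 2) * ∫ t in Set.Ioo (0:ℝ) 1, t ^ (a - 1) * (1 - t) ^ (b - 1) := by
    rw [intervalIntegral.integral_of_le zero_le_one,
      MeasureTheory.integral_Ioc_eq_integral_Ioo, ← MeasureTheory.integral_const_mul]
    refine setIntegral_congr_fun measurableSet_Ioo fun t ht => ?_
    obtain ⟨ht0, ht1⟩ := ht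
    rw [show c - c * t = c * (1 - t) by ring, Real.mul_rpow hc.le ht0.le,
      Real.mul_rpow hc.le (by linarith),
      show a + b - 2 = (a-1) + (b-1) by ring, Real.rpow_add hc]
    ring
  have h3 : (∫ y in (0:ℝ)..c, y ^ (a - 1) * (c - y) ^ (b - 1)) =
      c * ∫ t in (0:ℝ)..1, (c * t) ^ (a - 1) * (c - c * t) ^ (b - 1) := by
    rw [hsub, smul_eq_mul, ← mul_assoc, mul_inv_cancel₀ hc.ne', one_mul]
  rw [h1, h3, h2, realBeta a b ha hb, ← mul_assoc,
    show a + b - 1 = 1 + (a + b - 2) by ring, Real.rpow_add hc, Real.rpow_one]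

lemma Iic_castSucc' {k : ℕ} (j : Fin k) :
    Finset.Iic (Fin.castSucc j) = (Finset.Iic j).map Fin.castSuccEmb := by
  ext i
  simp only [Finset.mem_Iic, Finset.mem_map, Fin.castSuccEmb_apply]
  constructor
  · intro hi
    have hlt : (i : ℕ) < k := lt_of_le_of_lt (by exact_mod_cast hi) j.isLt
    exact ⟨⟨i, hlt⟩, by simpa [Fin.le_def] using hi, by simp [Fin.ext_iff]⟩
  · rintro ⟨a, ha, rfl⟩
    exact Fin.castSucc_le_castSucc_iff.mpr ha

lemma sum_Iic_snoc {k : ℕ} (x : Fin k → ℝ) (y : ℝ) (j : Fin k) :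
    ∑ i ∈ Finset.Iic (Fin.castSucc j), Fin.snoc x y i = ∑ i ∈ Finset.Iic j, x i := by
  rw [Iic_castSucc', Finset.sum_map]
  exact Finset.sum_congr rfl fun a _ => by simp [Fin.snoc, Fin.castSuccEmb, a.isLt]

lemma snoc_denom {k : ℕ} (x : Fin k → ℝ) (y : ℝ) :
    ∏ j : Fin (k+1), (1 - ∑ i ∈ Finset.Iic j, Fin.snoc x y i) =
      (∏ j : Fin k, (1 - ∑ i ∈ Finset.Iic j, x i)) * (1 - (∑ i, x i + y)) := by
  rw [Fin.prod_univ_castSucc]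
  congr 1
  · exact Finset.prod_congr rfl fun j _ => by rw [sum_Iic_snoc]
  · congr 1
    rw [show Finset.Iic (Fin.last k) = Finset.univ from by ext i; simp [Fin.le_last],
      Fin.sum_univ_castSucc]
    simp

lemma snoc_sum {k : ℕ} (x : Fin k → ℝ) (y : ℝ) :
    ∑ i : Fin (k+1), Fin.snoc x y i = ∑ i, x i + y := by
  rw [Fin.sum_univ_castSucc]; simp

lemma snoc_prod_rpow {k : ℕ} (x : Fin k → ℝ) (y α : ℝ) :
    ∏ j : Fin (k+1), (Fin.snoc x y j) ^ (-α) = (∏ j, x j ^ (-α)) * y ^ (-α) := by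
  rw [Fin.prod_univ_castSucc]; simp

/-- The Beta function `B(a,b) = Γ(a)Γ(b)/Γ(a+b)`. -/
noncomputable def Bfun (a b : ℝ) : ℝ := Real.Gamma a * Real.Gamma b / Real.Gamma (a + b)

theorem Bfun_pos {a b : ℝ} (ha : 0 < a) (hb : 0 < b) : 0 < Bfun a b :=
  div_pos (mul_pos (Real.Gamma_pos_of_pos ha) (Real.Gamma_pos_of_pos hb))
    (Real.Gamma_pos_of_pos (by linarith))

theorem beta_step (u b : ℝ) (hu : 0 < u) (hb : 0 < b) :
    (u + b) * Bfun (u + 1) b = u * Bfun u b := by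
  unfold Bfun
  rw [show u + 1 + b = (u + b) + 1 by ring, Real.Gamma_add_one hu.ne',
    Real.Gamma_add_one (show u + b ≠ 0 by positivity)]
  have h : Real.Gamma (u + b) ≠ 0 := (Real.Gamma_pos_of_pos (by linarith)).ne'
  field_simp

/-- The GEM*-density: density of the `k`-th size-biased marginal of `PD*_{α,θ}` on
`{x∈(0,1)^k : x_1+⋯+x_k<1}`. -/
noncomputable def gemStar (α θ : ℝ) {k : ℕ} (x : Fin k → ℝ) : ℝ :=
  (α * Real.Gamma (2 + θ / α) /
      (Real.Gamma (1 - α) * Real.Gamma (θ + α + 1) *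
        ∏ j ∈ Finset.Icc 2 k, Bfun (1 - α) (θ + (j : ℝ) * α))) *
    (1 - ∑ i, x i) ^ (θ + (k : ℝ) * α) * (∏ j, x j ^ (-α)) /
    ∏ j : Fin k, (1 - ∑ i ∈ Finset.Iic j, x i)

set_option maxHeartbeats 1000000 in
/-- With `θ = −α−γ`, for `x∈(0,1)^k` with `S = x_1+⋯+x_k < 1`,
`∫_0^{1−S} y·(1−S)·gem*_{k+1}(x,y) dy = ((1−α)/(1+(k−1)α−γ))·(1−S)²·gem*_k(x)`. -/
theorem stmt13 (α γ : ℝ) (hα : α ∈ Set.Ioo (0 : ℝ) 1) (hγ : γ ∈ Set.Ioo (0 : ℝ) α)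
    (k : ℕ) (hk : 1 ≤ k) (x : Fin k → ℝ) (hx : ∀ i, x i ∈ Set.Ioo (0 : ℝ) 1)
    (hS : ∑ i, x i < 1) :
    ∫ y in Set.Ioo (0 : ℝ) (1 - ∑ i, x i),
        y * (1 - ∑ i, x i) * gemStar α (-α - γ) (Fin.snoc x y) =
      ((1 - α) / (1 + ((k : ℝ) - 1) * α - γ)) * (1 - ∑ i, x i) ^ 2 *
        gemStar α (-α - γ) x := by
  obtain ⟨hα0, hα1⟩ := hα
  obtain ⟨hγ0, hγα⟩ := hγ
  have hk1 : (1:ℝ) ≤ (k:ℝ) := by exact_mod_cast hk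
  set c : ℝ := 1 - ∑ i, x i with hcdef
  have hc : (0:ℝ) < c := by rw [hcdef]; linarith
  set B : ℝ := (k:ℝ) * α - γ with hBdef
  have hB : 0 < B := by rw [hBdef]; nlinarith
  set P : ℝ := ∏ j, x j ^ (-α) with hP
  set D : ℝ := ∏ j : Fin k, (1 - ∑ i ∈ Finset.Iic j, x i) with hD
  set N : ℝ := α * Real.Gamma (2 + (-α - γ) / α) with hN
  set G : ℝ := Real.Gamma (1 - α) * Real.Gamma (-α - γ + α + 1) with hG
  set Q : ℝ := ∏ j ∈ Finset.Icc 2 k, Bfun (1 - α) (-α - γ + (j:ℝ) * α) with hQ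
  have hDpos : 0 < D := by
    rw [hD]
    refine Finset.prod_pos fun j _ => ?_
    have hle : ∑ i ∈ Finset.Iic j, x i ≤ ∑ i, x i :=
      Finset.sum_le_sum_of_subset_of_nonneg (Finset.subset_univ _) fun i _ _ => (hx i).1.le
    linarith
  have hGne : G ≠ 0 := by
    rw [hG]
    exact (mul_pos (Real.Gamma_pos_of_pos (by linarith))
      (Real.Gamma_pos_of_pos (by linarith))).ne'
  clear_value c B P D N G Q
  have hBB : 0 < Bfun (1 - α) B := Bfun_pos (by linarith) hB
  have hQpos : 0 < Q := by
    rw [hQ]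
    refine Finset.prod_pos fun j hj => Bfun_pos (by linarith) ?_
    have hj2 : (2:ℝ) ≤ (j:ℝ) := by exact_mod_cast (Finset.mem_Icc.mp hj).1
    nlinarith
  have hm : (0:ℝ) < 1 - α + B := by linarith
  -- integrand identity
  have hint : ∀ y ∈ Set.Ioo (0:ℝ) c,
      y * c * gemStar α (-α - γ) (Fin.snoc x y) =
      (c * (N / (G * (Q * Bfun (1 - α) B))) * P / D) *
        (y ^ (2 - α - 1) * (c - y) ^ (B - 1)) := by
    intro y hy
    obtain ⟨hy0, hyc⟩ := hy
    have hcy : 0 < c - y := by linarith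
    rw [gemStar, snoc_sum, snoc_prod_rpow, snoc_denom, ← hP, ← hD]
    rw [show (1:ℝ) - (∑ i, x i + y) = c - y from by rw [hcdef]; ring]
    rw [show -α - γ + ((k+1 : ℕ):ℝ) * α = B from by rw [hBdef]; push_cast; ring]
    rw [show (∏ j ∈ Finset.Icc 2 (k+1), Bfun (1 - α) (-α - γ + (j:ℝ) * α)) =
        Q * Bfun (1 - α) B from by
      rw [Finset.prod_Icc_succ_top (by omega : 2 ≤ k + 1), ← hQ]
      congr 2
      rw [hBdef]; push_cast; ring]
    rw [← hN, ← hG]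
    rw [show (2:ℝ) - α - 1 = 1 + (-α) by ring, Real.rpow_add hy0, Real.rpow_one,
      show (c - y) ^ (B - 1) = (c - y) ^ B / (c - y) from by
        rw [Real.rpow_sub hcy, Real.rpow_one]]
    field_simp
  rw [setIntegral_congr_fun measurableSet_Ioo hint, MeasureTheory.integral_const_mul,
    realBetaScaled (2 - α) B c (by linarith) hB hc]
  rw [gemStar, ← hcdef, ← hP, ← hD, ← hN, ← hG, ← hQ]
  rw [show Real.Gamma (2 - α) * Real.Gamma B / Real.Gamma (2 - α + B) = Bfun (2 - α) B from rfl]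
  rw [show 1 + ((k:ℝ) - 1) * α - γ = 1 - α + B from by rw [hBdef]; ring]
  have key : Bfun (2 - α) B = (1 - α) * Bfun (1 - α) B / (1 - α + B) := by
    rw [eq_div_iff hm.ne']
    have h := beta_step (1 - α) B (by linarith) hB
    rw [show (1:ℝ) - α + 1 = 2 - α by ring] at h
    linarith [h]
  rw [key]
  rw [show (2:ℝ) - α + B - 1 = 1 + (-α - γ + (k:ℝ) * α) from by rw [hBdef]; ring,
    Real.rpow_add hc, Real.rpow_one]
  field_simp
end

section
/- Fix α∈(0,1), γ∈(0,α) and set θ=−α−γ. For every integer k≥1 and every x=(x_1,…,x_k)∈(0,1)^k with S := x_1+⋯+x_k < 1, ∫_0^{1−S} gem*_{α,θ;k+1}(x_1,…,x_k,y) dy = gem*_{α,θ;k}(x_1,…,x_k); that is, the GEM*-densities form a projectively consistent family. -/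
open scoped BigOperators
open MeasureTheory

lemma Iic_castSucc_eq {k : ℕ} (m : Fin k) :
    Finset.Iic m.castSucc = (Finset.Iic m).map ⟨Fin.castSucc, Fin.castSucc_injective k⟩ := by
  ext i
  simp only [Finset.mem_Iic, Finset.mem_map, Function.Embedding.coeFn_mk]
  constructor
  · intro h
    have hiv : (i : ℕ) ≤ (m : ℕ) := h
    have hik : (i : ℕ) < k := lt_of_le_of_lt hiv m.isLt
    exact ⟨⟨i, hik⟩, hiv, by ext; simp⟩
  · rintro ⟨j, hj, rfl⟩
    simpa [Fin.castSucc_le_castSucc_iff] using hj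

lemma Iic_last_eq (k : ℕ) : Finset.Iic (Fin.last k) = Finset.univ := by
  ext i; simp [Fin.le_last]

/-- Real Beta integral, scaled version. -/
lemma beta_integral_Ioo {a b c : ℝ} (ha : 0 < a) (hb : 0 < b) (hc : 0 < c) :
    ∫ y in Set.Ioo (0 : ℝ) c, y ^ (a - 1) * (c - y) ^ (b - 1) =
      c ^ (a + b - 1) * Bfun a b := by
  rw [← integral_Ioc_eq_integral_Ioo, ← intervalIntegral.integral_of_le hc.le]
  have hsc := Complex.betaIntegral_scaled (a : ℂ) (b : ℂ) hc
  have hbet : Complex.betaIntegral (a : ℂ) (b : ℂ) =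
      Complex.Gamma a * Complex.Gamma b / Complex.Gamma ((a : ℂ) + b) := by
    have hG := Complex.Gamma_mul_Gamma_eq_betaIntegral (s := (a : ℂ)) (t := (b : ℂ))
      (by simpa using ha) (by simpa using hb)
    have hne : Complex.Gamma ((a : ℂ) + b) ≠ 0 := by
      apply Complex.Gamma_ne_zero_of_re_pos
      simp only [Complex.add_re, Complex.ofReal_re]
      linarith
    rw [hG, mul_div_cancel_left₀ _ hne]
  have key : ∫ y in (0:ℝ)..c, ((y ^ (a - 1) * (c - y) ^ (b - 1) : ℝ) : ℂ) =
      ((c ^ (a + b - 1) * Bfun a b : ℝ) : ℂ) := by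
    have hcongr : ∀ y ∈ Set.uIcc (0:ℝ) c,
        ((y ^ (a - 1) * (c - y) ^ (b - 1) : ℝ) : ℂ) =
          (y : ℂ) ^ ((a : ℂ) - 1) * ((c : ℂ) - y) ^ ((b : ℂ) - 1) := by
      intro y hy
      rw [Set.uIcc_of_le hc.le, Set.mem_Icc] at hy
      push_cast
      rw [Complex.ofReal_cpow hy.1, Complex.ofReal_cpow (by linarith)]
      push_cast
      ring
    rw [intervalIntegral.integral_congr hcongr, hsc, hbet, Bfun, Complex.ofReal_mul,
      Complex.ofReal_cpow hc.le, Complex.ofReal_div, Complex.ofReal_mul,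
      ← Complex.Gamma_ofReal, ← Complex.Gamma_ofReal, ← Complex.Gamma_ofReal]
    push_cast
    ring
  have h2 := intervalIntegral.integral_ofReal
    (f := fun y => y ^ (a - 1) * (c - y) ^ (b - 1)) (a := 0) (b := c) (μ := volume)
  rw [h2] at key
  exact_mod_cast key

/-- Projective consistency of the GEM*-densities: with `θ = −α−γ`, for `x∈(0,1)^k`
with `S = x_1+⋯+x_k < 1`, `∫_0^{1−S} gem*_{k+1}(x,y) dy = gem*_k(x)`. -/
theorem stmt14 (α γ : ℝ) (hα : α ∈ Set.Ioo (0 : ℝ) 1) (hγ : γ ∈ Set.Ioo (0 : ℝ) α)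
    (k : ℕ) (hk : 1 ≤ k) (x : Fin k → ℝ) (hx : ∀ i, x i ∈ Set.Ioo (0 : ℝ) 1)
    (hS : ∑ i, x i < 1) :
    ∫ y in Set.Ioo (0 : ℝ) (1 - ∑ i, x i), gemStar α (-α - γ) (Fin.snoc x y) =
      gemStar α (-α - γ) x := by
  obtain ⟨hα0, hα1⟩ := hα
  obtain ⟨hγ0, hγα⟩ := hγ
  set θ : ℝ := -α - γ with hθ
  set S : ℝ := ∑ i, x i with hSdef
  set c : ℝ := 1 - S with hcdef
  have hc : 0 < c := by simp only [hcdef]; linarith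
  set a : ℝ := 1 - α with hadef
  set b : ℝ := θ + ((k : ℝ) + 1) * α with hbdef
  have ha : 0 < a := by simp only [hadef]; linarith
  have hb : 0 < b := by
    have hk1 : (1 : ℝ) ≤ (k : ℝ) := by exact_mod_cast hk
    have : (k : ℝ) * α ≥ 1 * α := mul_le_mul_of_nonneg_right hk1 hα0.le
    simp only [hbdef, hθ]
    nlinarith
  -- positivity of partial-sum denominators
  have hpos : ∀ j : Fin k, 0 < 1 - ∑ i ∈ Finset.Iic j, x i := by
    intro j
    have hle : ∑ i ∈ Finset.Iic j, x i ≤ S := by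
      apply Finset.sum_le_sum_of_subset_of_nonneg (Finset.subset_univ _)
      intro i _ _; exact (hx i).1.le
    linarith
  set D : ℝ := ∏ j : Fin k, (1 - ∑ i ∈ Finset.Iic j, x i) with hDdef
  have hD : 0 < D := Finset.prod_pos fun j _ => hpos j
  set P : ℝ := ∏ j, x j ^ (-α) with hPdef
  set C1 : ℝ := α * Real.Gamma (2 + θ / α) /
      (Real.Gamma (1 - α) * Real.Gamma (θ + α + 1) *
        ∏ j ∈ Finset.Icc 2 (k + 1), Bfun (1 - α) (θ + (j : ℝ) * α)) with hC1def
  set K : ℝ := C1 * P / D with hKdef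
  -- Step 1: pointwise identity on Ioo 0 c
  have hEq : Set.EqOn (fun y => gemStar α θ (Fin.snoc x y))
      (fun y => K * (y ^ (a - 1) * (c - y) ^ (b - 1))) (Set.Ioo 0 c) := by
    intro y hy
    obtain ⟨hy0, hyc⟩ := hy
    have hcy : 0 < c - y := by linarith
    simp only [gemStar]
    have hsum : ∑ i, (Fin.snoc x y : Fin (k+1) → ℝ) i = S + y := by
      rw [Fin.sum_univ_castSucc]
      simp [hSdef]
    have hprod : ∏ j, (Fin.snoc x y : Fin (k+1) → ℝ) j ^ (-α) = P * y ^ (-α) := by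
      rw [Fin.prod_univ_castSucc]
      simp [hPdef]
    have hden : ∏ j : Fin (k+1), (1 - ∑ i ∈ Finset.Iic j, (Fin.snoc x y : Fin (k+1) → ℝ) i)
        = D * (c - y) := by
      rw [Fin.prod_univ_castSucc]
      have h1 : ∀ m : Fin k, ∑ i ∈ Finset.Iic (Fin.castSucc m),
          (Fin.snoc x y : Fin (k+1) → ℝ) i = ∑ i ∈ Finset.Iic m, x i := by
        intro m
        rw [Iic_castSucc_eq, Finset.sum_map]
        simp
      have h2 : ∑ i ∈ Finset.Iic (Fin.last k), (Fin.snoc x y : Fin (k+1) → ℝ) i = S + y := by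
        rw [Iic_last_eq, hsum]
      rw [h2]
      simp only [h1]
      rw [hDdef, hcdef]
      ring
    rw [hsum, hprod, hden]
    have hcast : ((k + 1 : ℕ) : ℝ) = (k : ℝ) + 1 := by push_cast; ring
    have h1Sy : 1 - (S + y) = c - y := by rw [hcdef]; ring
    rw [hcast, h1Sy]
    have hrpow : (c - y) ^ (b - 1) = (c - y) ^ b / (c - y) := by
      rw [Real.rpow_sub_one hcy.ne']
    have ham1 : a - 1 = -α := by rw [hadef]; ring
    rw [hrpow, ham1, ← hC1def, ← hbdef, hKdef]
    have hDne : D ≠ 0 := hD.ne'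
    field_simp
  rw [setIntegral_congr_fun measurableSet_Ioo hEq]
  rw [integral_const_mul, beta_integral_Ioo ha hb hc]
  -- Step 3: algebra
  have hab1 : a + b - 1 = θ + (k : ℝ) * α := by rw [hadef, hbdef]; ring
  rw [hab1]
  have hsplit : ∏ j ∈ Finset.Icc 2 (k + 1), Bfun (1 - α) (θ + (j : ℝ) * α) =
      (∏ j ∈ Finset.Icc 2 k, Bfun (1 - α) (θ + (j : ℝ) * α)) * Bfun a b := by
    rw [Finset.prod_Icc_succ_top (by omega), hadef, hbdef]
    norm_cast
  have hΓ1 : 0 < Real.Gamma (1 - α) := Real.Gamma_pos_of_pos (by linarith)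
  have hΓ2 : 0 < Real.Gamma (θ + α + 1) := by
    apply Real.Gamma_pos_of_pos; rw [hθ]; linarith
  have hprodpos : 0 < ∏ j ∈ Finset.Icc 2 k, Bfun (1 - α) (θ + (j : ℝ) * α) := by
    apply Finset.prod_pos
    intro j hj
    rw [Finset.mem_Icc] at hj
    have hj2 : (2 : ℝ) ≤ (j : ℝ) := by exact_mod_cast hj.1
    have hb1 : 0 < θ + (j : ℝ) * α := by rw [hθ]; nlinarith
    have hb2 : 0 < (1 - α) + (θ + (j : ℝ) * α) := by rw [hθ]; nlinarith
    exact div_pos (mul_pos (Real.Gamma_pos_of_pos (by linarith))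
      (Real.Gamma_pos_of_pos hb1)) (Real.Gamma_pos_of_pos hb2)
  have hBab : 0 < Bfun a b := by
    have : 0 < a + b := by linarith
    exact div_pos (mul_pos (Real.Gamma_pos_of_pos ha) (Real.Gamma_pos_of_pos hb))
      (Real.Gamma_pos_of_pos this)
  simp only [gemStar]
  rw [← hSdef, ← hcdef, ← hPdef, ← hDdef, hKdef, hC1def, hsplit]
  have h1 : Real.Gamma (1 - α) ≠ 0 := hΓ1.ne'
  have h2 : Real.Gamma (θ + α + 1) ≠ 0 := hΓ2.ne'
  have h3 : (∏ j ∈ Finset.Icc 2 k, Bfun (1 - α) (θ + (j : ℝ) * α)) ≠ 0 := hprodpos.ne'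
  have h4 : Bfun a b ≠ 0 := hBab.ne'
  have h5 : D ≠ 0 := hD.ne'
  field_simp
end

section
/- Let ν be a σ-finite measure on the space of sequences s=(s_1,s_2,…) of real numbers that is concentrated on the set of nonincreasing sequences with s_i≥0 for all i and Σ_{i≥1} s_i = 1. For an integer k≥2, define the k-th size-biased marginal ν_k^{sb} as the measure on ℝ^k given by ν_k^{sb} = Σ_{ι} (image under s↦(s_{ι(1)},…,s_{ι(k)}) of ν weighted by the density s ↦ ∏_{l=1}^k s_{ι(l)} / ∏_{j=1}^{k−1}(1−Σ_{l=1}^j s_{ι(l)})), the sum ranging over all injective maps ι:{1,…,k}→ℕ, with the convention that the weight is 0 whenever some factor 1−Σ_{l=1}^j s_{ι(l)} vanishes. Then for all positive integers n_1,…,n_k, ∫_{ℝ^k} ∏_{j=1}^k x_j^{n_j−1} · ∏_{j=1}^{k−1}(1−x_1−⋯−x_j) dν_k^{sb}(x) = ∫ ( Σ_{i_1,…,i_k distinct} ∏_{j=1}^k s_{i_j}^{n_j} ) dν(s), as an identity of (possibly infinite) integrals of nonnegative functions. -/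
open scoped BigOperators
open MeasureTheory

/-- Size-biased weight of an injective index choice `ι` applied to a mass partition `s`:
`∏_{l=1}^k s_{ι(l)} / ∏_{j=1}^{k−1}(1 − Σ_{l=1}^j s_{ι(l)})` (equal to `0` when some
factor of the denominator vanishes, by the convention `x/0 = 0`). -/
noncomputable def sbWeight {k : ℕ} (ι : Fin k → ℕ) (s : ℕ → ℝ) : ℝ :=
  (∏ l, s (ι l)) /
    ∏ j ∈ Finset.univ.filter (fun j : Fin k => (j : ℕ) + 1 < k),
      (1 - ∑ l ∈ Finset.Iic j, s (ι l))

/-- The `k`-th size-biased marginal `ν_k^{sb}` of a measure `ν` on mass-partition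
sequences: the sum over all injective `ι : Fin k → ℕ` of the image under
`s ↦ (s_{ι(1)},…,s_{ι(k)})` of `ν` weighted by the size-biased density. -/
noncomputable def nusb (ν : Measure (ℕ → ℝ)) (k : ℕ) : Measure (Fin k → ℝ) :=
  Measure.sum (fun ι : {f : Fin k → ℕ // Function.Injective f} =>
    Measure.map (fun s (j : Fin k) => s (ι.1 j))
      (ν.withDensity (fun s => ENNReal.ofReal (sbWeight ι.1 s))))

/-- Proposition 15 of the paper: for a σ-finite measure `ν` concentrated on nonincreasing
nonnegative sequences with `Σ_i s_i = 1`, and positive integers `n_1,…,n_k`,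
`∫ ∏_j x_j^{n_j−1}·∏_{j=1}^{k−1}(1−x_1−⋯−x_j) dν_k^{sb}(x)
  = ∫ Σ_{i_1,…,i_k distinct} ∏_j s_{i_j}^{n_j} dν(s)`,
as an identity of (possibly infinite) integrals of nonnegative functions. -/
theorem stmt16 (ν : Measure (ℕ → ℝ)) (hσ : SigmaFinite ν)
    (hconc : ν {s : ℕ → ℝ |
      ¬((∀ i, 0 ≤ s i) ∧ (∀ i j, i ≤ j → s j ≤ s i) ∧ (∑' i, s i) = 1)} = 0)
    (k : ℕ) (hk : 2 ≤ k) (n : Fin k → ℕ) (hn : ∀ j, 1 ≤ n j) :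
    ∫⁻ x, ENNReal.ofReal ((∏ j, x j ^ (n j - 1)) *
          ∏ j ∈ Finset.univ.filter (fun j : Fin k => (j : ℕ) + 1 < k),
            (1 - ∑ l ∈ Finset.Iic j, x l)) ∂(nusb ν k) =
      ∫⁻ s, (∑' ι : {f : Fin k → ℕ // Function.Injective f},
          ∏ j, ENNReal.ofReal (s (ι.1 j)) ^ (n j)) ∂ν := by
  classical
  have hgood : ∀ᵐ s ∂ν, (∀ i, 0 ≤ s i) ∧ (∀ i j, i ≤ j → s j ≤ s i) ∧ (∑' i, s i) = 1 :=
    MeasureTheory.ae_iff.mpr hconc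
  -- the pointwise identity on the good set
  have key : ∀ (ι : Fin k → ℕ), Function.Injective ι → ∀ s : ℕ → ℝ,
      (∀ i, 0 ≤ s i) → (∑' i, s i) = 1 →
      ENNReal.ofReal (sbWeight ι s) *
        ENNReal.ofReal ((∏ j, s (ι j) ^ (n j - 1)) *
          ∏ j ∈ Finset.univ.filter (fun j : Fin k => (j : ℕ) + 1 < k),
            (1 - ∑ l ∈ Finset.Iic j, s (ι l))) =
      ∏ j, ENNReal.ofReal (s (ι j)) ^ (n j) := by
    intro ι hι s hs hsum
    have hsummable : Summable s := by
      by_contra h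
      rw [tsum_eq_zero_of_not_summable h] at hsum
      norm_num at hsum
    have himg : ∀ j : Fin k, ∑ l ∈ Finset.Iic j, s (ι l)
        = ∑ i ∈ (Finset.Iic j).image ι, s i := by
      intro j
      rw [Finset.sum_image (fun a _ b _ h => hι h)]
    have hpartial : ∀ j : Fin k, ∑ l ∈ Finset.Iic j, s (ι l) ≤ 1 := by
      intro j
      rw [himg j, ← hsum]
      exact Summable.sum_le_tsum _ (fun i _ => hs i) hsummable
    set D := ∏ j ∈ Finset.univ.filter (fun j : Fin k => (j : ℕ) + 1 < k),
      (1 - ∑ l ∈ Finset.Iic j, s (ι l)) with hD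
    by_cases hD0 : D = 0
    · -- some partial sum equals 1, so some later coordinate vanishes
      have hD0' := hD0
      rw [hD, Finset.prod_eq_zero_iff] at hD0'
      obtain ⟨j, hjF, hj0⟩ := hD0'
      have hjk : (j : ℕ) + 1 < k := (Finset.mem_filter.mp hjF).2
      set j' : Fin k := ⟨(j : ℕ) + 1, hjk⟩ with hj'
      have hnot : ι j' ∉ (Finset.Iic j).image ι := by
        intro h
        obtain ⟨l, hl, he⟩ := Finset.mem_image.mp h
        have hlj : l ≤ j := Finset.mem_Iic.mp hl
        have : l = j' := hι he
        subst this
        have : (j : ℕ) + 1 ≤ (j : ℕ) := hlj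
        omega
      have hsum1 : ∑ i ∈ (Finset.Iic j).image ι, s i = 1 := by
        rw [← himg j]; linarith
      have hle : ∑ i ∈ insert (ι j') ((Finset.Iic j).image ι), s i ≤ 1 := by
        rw [← hsum]
        exact Summable.sum_le_tsum _ (fun i _ => hs i) hsummable
      rw [Finset.sum_insert hnot, hsum1] at hle
      have hzero : s (ι j') = 0 := le_antisymm (by linarith) (hs _)
      have hsb : sbWeight ι s = 0 := by
        show (∏ l, s (ι l)) / D = 0
        rw [hD0, div_zero]
      rw [hsb, ENNReal.ofReal_zero, zero_mul]
      symm
      apply Finset.prod_eq_zero (Finset.mem_univ j')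
      rw [hzero, ENNReal.ofReal_zero]
      exact zero_pow (by have := hn j'; omega)
    · have hDnn : 0 ≤ D :=
        Finset.prod_nonneg fun j _ => by linarith [hpartial j]
      have hP : 0 ≤ ∏ l, s (ι l) := Finset.prod_nonneg fun l _ => hs _
      have hf : 0 ≤ ∏ j, s (ι j) ^ (n j - 1) :=
        Finset.prod_nonneg fun j _ => pow_nonneg (hs _) _
      have hsb : sbWeight ι s = (∏ l, s (ι l)) / D := rfl
      rw [hsb, ← ENNReal.ofReal_mul (div_nonneg hP hDnn)]
      have hPf : (∏ l, s (ι l)) / D * ((∏ j, s (ι j) ^ (n j - 1)) * D)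
          = ∏ j, s (ι j) ^ (n j) := by
        have h1 : (∏ l, s (ι l)) / D * ((∏ j, s (ι j) ^ (n j - 1)) * D)
            = (∏ l, s (ι l)) * (∏ j, s (ι j) ^ (n j - 1)) := by
          field_simp
        rw [h1, ← Finset.prod_mul_distrib]
        exact Finset.prod_congr rfl fun j _ => by
          rw [← pow_succ', Nat.sub_add_cancel (hn j)]
      rw [hPf, ENNReal.ofReal_prod_of_nonneg (fun j _ => pow_nonneg (hs _) _)]
      exact Finset.prod_congr rfl fun j _ => ENNReal.ofReal_pow (hs _) _
  -- measurability
  have meas_g : Measurable (fun x : Fin k → ℝ => ENNReal.ofReal ((∏ j, x j ^ (n j - 1)) *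
      ∏ j ∈ Finset.univ.filter (fun j : Fin k => (j : ℕ) + 1 < k),
        (1 - ∑ l ∈ Finset.Iic j, x l))) := by
    apply ENNReal.measurable_ofReal.comp
    exact ((Finset.measurable_prod _ fun j _ => (measurable_pi_apply j).pow_const _).mul
      (Finset.measurable_prod _ fun j _ =>
        measurable_const.sub (Finset.measurable_sum _ fun l _ => measurable_pi_apply l)))
  have meas_w : ∀ ι : Fin k → ℕ, Measurable (fun s => ENNReal.ofReal (sbWeight ι s)) := by
    intro ι
    apply ENNReal.measurable_ofReal.comp
    exact ((Finset.measurable_prod _ fun l _ => measurable_pi_apply (ι l)).div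
      (Finset.measurable_prod _ fun j _ =>
        measurable_const.sub (Finset.measurable_sum _ fun l _ => measurable_pi_apply (ι l))))
  have meas_map : ∀ ι : Fin k → ℕ, Measurable (fun (s : ℕ → ℝ) (j : Fin k) => s (ι j)) :=
    fun ι => measurable_pi_lambda _ fun j => measurable_pi_apply (ι j)
  rw [nusb, lintegral_sum_measure]
  have htsum := lintegral_tsum (μ := ν)
    (f := fun (ι : {f : Fin k → ℕ // Function.Injective f}) (s : ℕ → ℝ) =>
      ∏ j, ENNReal.ofReal (s (ι.1 j)) ^ (n j))
    (fun ι => (Finset.measurable_prod _ fun j _ =>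
      ((ENNReal.measurable_ofReal.comp (measurable_pi_apply (ι.1 j))).pow_const _)).aemeasurable)
  rw [htsum]
  apply tsum_congr
  intro ι
  rw [lintegral_map meas_g (meas_map ι.1)]
  refine Eq.trans
    (lintegral_withDensity_eq_lintegral_mul ν (meas_w ι.1) (meas_g.comp (meas_map ι.1))) ?_
  apply lintegral_congr_ae
  filter_upwards [hgood] with s hsgood
  exact key ι.1 ι.2 s hsgood.1 hsgood.2.2
end
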